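/- arXiv:1505.06385 — 6 statements merged into one kernel-verified Lean document; each statement's English description precedes it below -/
import Mathlib

section
/- The kernel of Tr_{T/S} : T → T is a free S-module of rank n − 1. -/
/-!
The trace lands in the fixed module `F = ker (σ - 1)`, and it is nonzero: its reduction
`1 + τ + ⋯ + τ^(n-1)` modulo `π`, where `τ` is the reduction of `σ` (of order `n`), is a nontrivial
combination of distinct characters of the residue field, so Dedekind's lemma applies. On the
other hand `F/πF` embeds into the fixed field of `τ`, which by Artin's theorem has `q` elements
where `q ^ n = |T/πT|`, `q = |S/πS|`; counting gives `rank F ≤ 1`. So the image of the trace has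
rank `1`, and the kernel, a submodule of a free module over a PID, is free of rank `n - 1`.
-/

open Module Pointwise

theorem natCard_quotSMulTop {S : Type*} [CommRing S] [Nontrivial S] (π : S)
    (M : Type*) [AddCommGroup M] [Module S M] [Module.Free S M] [Module.Finite S M] :
    Nat.card (QuotSMulTop π M) = Nat.card (S ⧸ Ideal.span {π}) ^ finrank S M := by
  let e := QuotSMulTop.equivQuotTensor π M ≪≫ₗ
    (Module.finBasis S M).equivFun.lTensor (S ⧸ Ideal.span {π}) ≪≫ₗ
    TensorProduct.piScalarRight S S (S ⧸ Ideal.span {π}) (Fin (finrank S M))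
  rw [Nat.card_congr e.toEquiv, Nat.card_fun, Nat.card_fin]

theorem QuotSMulTop.map_subtype_ker_injective {S M : Type*} [CommRing S] [AddCommGroup M]
    [Module S M] {π : S} (hπ : IsSMulRegular M π) (g : Module.End S M) :
    Function.Injective (QuotSMulTop.map π (LinearMap.ker g).subtype) := by
  refine (injective_iff_map_eq_zero _).mpr fun w hw => ?_
  obtain ⟨x, rfl⟩ := Submodule.Quotient.mk_surjective _ w
  rw [QuotSMulTop.map_apply_mk, Submodule.Quotient.mk_eq_zero] at hw
  obtain ⟨y, -, hy⟩ := Submodule.mem_smul_pointwise_iff_exists _ _ _ |>.mp hw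
  have hgy : g y = 0 := hπ <| show π • g y = π • 0 by
    rw [smul_zero, ← map_smul, hy]
    exact x.2
  have : x = π • ⟨y, hgy⟩ := Subtype.ext hy.symm
  rw [Submodule.Quotient.mk_eq_zero, this]
  exact Submodule.smul_mem_pointwise_smul _ _ _ trivial

theorem Module.End.range_geom_sum_le_ker_sub_one {R M : Type*} [CommRing R] [AddCommGroup M]
    [Module R M] {f : Module.End R M} {n : ℕ} (hf : f ^ n = 1) :
    LinearMap.range (∑ i ∈ Finset.range n, f ^ i) ≤ LinearMap.ker (f - 1) := by
  rw [LinearMap.range_le_ker_iff, ← Module.End.mul_eq_comp, mul_geom_sum, hf, sub_self]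

theorem AlgEquiv.exists_sum_pow_apply_ne_zero {R K : Type*} [CommSemiring R] [Field K]
    [Algebra R K] (τ : K ≃ₐ[R] K) {n : ℕ} (hn : 0 < n) (hτ : Set.InjOn (τ ^ ·) (Set.Iio n)) :
    ∃ z : K, ∑ i ∈ Finset.range n, (τ ^ i) z ≠ 0 := by
  by_contra! hzero
  let χ : Fin n → K →* K := fun i => ((τ ^ (i : ℕ) : K ≃ₐ[R] K) : K →* K)
  have hχ : Function.Injective χ := fun i j hij =>
    Fin.ext <| hτ i.isLt j.isLt <| show τ ^ (i : ℕ) = τ ^ (j : ℕ) from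
      AlgEquiv.ext fun z => DFunLike.congr_fun hij z
  have hsum : ∑ i, (1 : K) • (χ i : K → K) = 0 := by
    funext z
    have := hzero z
    rw [← Fin.sum_univ_eq_sum_range] at this
    simpa [χ] using this
  exact one_ne_zero <| Fintype.linearIndependent_iff.mp
    ((linearIndependent_monoidHom K K).comp χ hχ) (fun _ => 1) hsum ⟨0, hn⟩

theorem natCard_eq_natCard_fixedBy_pow_orderOf {G K : Type*} [Group G] [Field K] [Finite K]
    [MulSemiringAction G K] [FaithfulSMul G K] {g : G} (hg : IsOfFinOrder g) :
    Nat.card K = Nat.card (MulAction.fixedBy K g) ^ orderOf g := by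
  have : Fintype (Subgroup.zpowers g) := hg.finite_zpowers.fintype
  have hfixed :
      (FixedPoints.subfield (Subgroup.zpowers g) K : Set K) = MulAction.fixedBy K g := by
    ext x
    refine ⟨fun h => h ⟨g, Subgroup.mem_zpowers g⟩, fun h => ?_⟩
    rintro ⟨_, k, rfl⟩
    exact MulAction.mem_fixedBy_zpow h k
  rw [← Nat.card_zpowers, Nat.card_eq_fintype_card (α := Subgroup.zpowers g),
    ← FixedPoints.finrank_eq_card (Subgroup.zpowers g) K, ← hfixed]
  exact Module.natCard_eq_pow_finrank

section Reduction

variable {S T : Type*} [CommRing S] [CommRing T] [Algebra S T]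

noncomputable def QuotSMulTop.equivQuotientSpanAlgebraMap (r : S) :
    QuotSMulTop r T ≃ₗ[S] T ⧸ Ideal.span {algebraMap S T r} :=
  Submodule.quotEquivOfEq _ _
      (by rw [← Submodule.ideal_span_singleton_smul, Ideal.smul_top_eq_map, Ideal.map_span,
        Set.image_singleton]) ≪≫ₗ
    Submodule.Quotient.restrictScalarsEquiv S _

namespace AlgEquiv

noncomputable def reduceMod (σ : T ≃ₐ[S] T) (r : S) :
    (T ⧸ Ideal.span {algebraMap S T r}) ≃ₐ[S] T ⧸ Ideal.span {algebraMap S T r} :=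
  Ideal.quotientEquivAlg _ _ σ <| by
    rw [Ideal.map_span, Set.image_singleton, RingHom.coe_coe, σ.commutes]

theorem reduceMod_pow_mk (σ : T ≃ₐ[S] T) (r : S) (k : ℕ) (x : T) :
    (σ.reduceMod r ^ k) (Ideal.Quotient.mk _ x) = Ideal.Quotient.mk _ ((σ ^ k) x) := by
  simp only [coe_pow]
  exact (Function.Semiconj.iterate_right (f := Ideal.Quotient.mk _) (fun _ => rfl) k x).symm

theorem orderOf_reduceMod (σ : T ≃ₐ[S] T) (r : S) {n : ℕ} (hn : 0 < n) (hσn : σ ^ n = 1)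
    (hgen : ∀ i : ℕ, 0 < i → i < n →
      ∃ t : T, (σ ^ i) t - t ∉ Ideal.span {algebraMap S T r}) :
    orderOf (σ.reduceMod r) = n := by
  refine (orderOf_eq_iff hn).mpr ⟨?_, fun i hin hi hσi => ?_⟩
  · ext z
    obtain ⟨x, rfl⟩ := Ideal.Quotient.mk_surjective z
    rw [reduceMod_pow_mk, hσn]
    rfl
  · obtain ⟨t, ht⟩ := hgen i hi hin
    apply ht
    rw [← Ideal.Quotient.eq, ← reduceMod_pow_mk, hσi]
    rfl

theorem sum_pow_toLinearMap_ne_zero (σ : T ≃ₐ[S] T) (r : S)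
    [(Ideal.span {algebraMap S T r}).IsMaximal] {n : ℕ}
    (hn : 0 < n) (hσ : orderOf (σ.reduceMod r) = n) :
    ∑ i ∈ Finset.range n, (σ ^ i).toLinearMap ≠ 0 := by
  let := Ideal.Quotient.field (Ideal.span {algebraMap S T r})
  obtain ⟨z, hz⟩ := (σ.reduceMod r).exists_sum_pow_apply_ne_zero hn (hσ ▸ pow_injOn_Iio_orderOf)
  obtain ⟨t, rfl⟩ := Ideal.Quotient.mk_surjective z
  intro hzero
  apply hz
  have : ∑ i ∈ Finset.range n, (σ ^ i) t = 0 := by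
    simpa [LinearMap.sum_apply] using LinearMap.congr_fun hzero t
  simp only [reduceMod_pow_mk, ← map_sum, this, map_zero]

end AlgEquiv

end Reduction

section Unramified

variable {S : Type*} [CommRing S] [IsDomain S] {π : S}
  [Finite (S ⧸ Ideal.span {π})] {T : Type*} [CommRing T] [Algebra S T] [Module.Free S T]
  [Module.Finite S T]

theorem natCard_quotSMulTop_ker_sub_one_le (hπ : π ≠ 0) (σ : T ≃ₐ[S] T) :
    Nat.card (QuotSMulTop π (LinearMap.ker (σ.toLinearMap - 1))) ≤
      Nat.card (MulAction.fixedBy (T ⧸ Ideal.span {algebraMap S T π}) (σ.reduceMod π)) := by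
  let e := QuotSMulTop.equivQuotientSpanAlgebraMap (T := T) π
  have : Finite (T ⧸ Ideal.span {algebraMap S T π}) :=
    Nat.finite_of_card_ne_zero <| by
      rw [← Nat.card_congr e.toEquiv, natCard_quotSMulTop]
      exact pow_ne_zero _ Nat.card_pos.ne'
  let ι := fun w => e (QuotSMulTop.map π (LinearMap.ker (σ.toLinearMap - 1)).subtype w)
  have hι : ∀ w, ι w ∈ MulAction.fixedBy (T ⧸ Ideal.span {algebraMap S T π}) (σ.reduceMod π) := by
    intro w
    obtain ⟨⟨x, hx⟩, rfl⟩ := Submodule.Quotient.mk_surjective _ w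
    have hσx : σ x = x := by simpa [sub_eq_zero] using hx
    exact congrArg (Ideal.Quotient.mk _) hσx
  exact Nat.card_le_card_of_injective (Set.codRestrict ι _ hι) <|
    (Set.injective_codRestrict hι).mpr <| e.injective.comp <|
      QuotSMulTop.map_subtype_ker_injective (IsSMulRegular.of_ne_zero hπ) _

variable [IsPrincipalIdealRing S] [(Ideal.span {algebraMap S T π}).IsMaximal]

theorem finrank_ker_sub_one_mul_orderOf_reduceMod_le (hπ : Irreducible π) (σ : T ≃ₐ[S] T) :
    finrank S (LinearMap.ker (σ.toLinearMap - 1)) * orderOf (σ.reduceMod π) ≤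
      finrank S T := by
  let := Ideal.Quotient.field (Ideal.span {algebraMap S T π})
  set q := Nat.card (S ⧸ Ideal.span {π})
  have hq : 1 < q := by
    have : Nontrivial (S ⧸ Ideal.span {π}) :=
      Ideal.Quotient.nontrivial_iff.mpr (by simpa using hπ.not_isUnit)
    exact Finite.one_lt_card
  have hT : Nat.card (T ⧸ Ideal.span {algebraMap S T π}) = q ^ finrank S T := by
    rw [← Nat.card_congr (QuotSMulTop.equivQuotientSpanAlgebraMap π).toEquiv, natCard_quotSMulTop]
  have : Finite (T ⧸ Ideal.span {algebraMap S T π}) :=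
    Nat.finite_of_card_ne_zero (by rw [hT]; positivity)
  rcases (orderOf (σ.reduceMod π)).eq_zero_or_pos with h0 | hpos
  · simp [h0]
  have hK := natCard_eq_natCard_fixedBy_pow_orderOf (K := T ⧸ Ideal.span {algebraMap S T π})
    (orderOf_pos_iff.mp hpos)
  have hF := natCard_quotSMulTop_ker_sub_one_le hπ.ne_zero σ
  rw [natCard_quotSMulTop] at hF
  rw [← Nat.pow_le_pow_iff_right hq, pow_mul, ← hT, hK]
  exact Nat.pow_le_pow_left hF _

end Unramified

theorem statement2_general
    (S : Type*) [CommRing S] [IsDomain S] [IsDiscreteValuationRing S]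
    (π : S) (hπ : Irreducible π)
    [Finite (S ⧸ Ideal.span {π})]
    (T : Type*) [CommRing T] [IsDomain T] [IsDiscreteValuationRing T]
    [Algebra S T] [Module.Free S T]
    (n : ℕ) (hn : 1 ≤ n) (hrank : Module.finrank S T = n)
    (hmax : IsLocalRing.maximalIdeal T = Ideal.span {algebraMap S T π})
    (σ : T ≃ₐ[S] T) (hσn : σ ^ n = 1)
    (hgen : ∀ i : ℕ, 0 < i → i < n →
      ∃ t : T, (σ ^ i) t - t ∉ Ideal.span {algebraMap S T π}) :
    Module.Free S (LinearMap.ker (∑ i ∈ Finset.range n, (σ ^ i).toLinearMap)) ∧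
    Module.finrank S (LinearMap.ker (∑ i ∈ Finset.range n, (σ ^ i).toLinearMap)) = n - 1 := by
  have : Module.Finite S T := Module.finite_of_finrank_pos (by omega)
  have : (Ideal.span {algebraMap S T π}).IsMaximal := hmax ▸ IsLocalRing.maximalIdeal.isMaximal T
  have hτ : orderOf (σ.reduceMod π) = n := σ.orderOf_reduceMod π hn hσn hgen
  set Tr := ∑ i ∈ Finset.range n, (σ ^ i).toLinearMap
  have hfixed : finrank S (LinearMap.ker (σ.toLinearMap - 1)) ≤ 1 := by
    have := finrank_ker_sub_one_mul_orderOf_reduceMod_le hπ σ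
    rw [hτ, hrank] at this
    exact Nat.le_of_mul_le_mul_right (by simpa using this) hn
  have hTr : LinearMap.range Tr ≤ LinearMap.ker (σ.toLinearMap - 1) := by
    simpa only [Tr, AlgEquiv.pow_toLinearMap] using
      Module.End.range_geom_sum_le_ker_sub_one (by rw [← AlgEquiv.pow_toLinearMap, hσn]; rfl)
  have hrange : finrank S (LinearMap.range Tr) = 1 :=
    le_antisymm ((Submodule.finrank_mono hTr).trans hfixed) <| Nat.one_le_iff_ne_zero.mpr <|
      Submodule.finrank_eq_zero.not.mpr <| LinearMap.range_eq_bot.not.mpr <|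
        σ.sum_pow_toLinearMap_ne_zero π hn hτ
  refine ⟨inferInstance, ?_⟩
  have := Tr.quotKerEquivRange.finrank_eq ▸ (LinearMap.ker Tr).finrank_quotient_add_finrank
  omega

/-- In the unramified setting (`S` a complete DVR with uniformizer `π` and
finite residue field, `T` an `S`-algebra DVR, finite free of rank `n ≥ 1` over `S` with maximal
ideal generated by the image of `π`, and `σ` an `S`-algebra automorphism with `σ ^ n = 1` whose
reduction mod `π` generates the Galois group of the residue extension), the kernel of the trace
`Tr = 1 + σ + ⋯ + σ^(n-1) : T → T` is a free `S`-module of rank `n - 1`. -/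
theorem statement2
    (S : Type*) [CommRing S] [IsDomain S] [IsDiscreteValuationRing S]
    (π : S) (hπ : Irreducible π)
    [IsAdicComplete (Ideal.span {π}) S] [Finite (S ⧸ Ideal.span {π})]
    (T : Type*) [CommRing T] [IsDomain T] [IsDiscreteValuationRing T]
    [Algebra S T] [Module.Free S T]
    (n : ℕ) (hn : 1 ≤ n) (hrank : Module.finrank S T = n)
    (hmax : IsLocalRing.maximalIdeal T = Ideal.span {algebraMap S T π})
    (σ : T ≃ₐ[S] T) (hσn : σ ^ n = 1)
    (hgen : ∀ i : ℕ, 0 < i → i < n →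
      ∃ t : T, (σ ^ i) t - t ∉ Ideal.span {algebraMap S T π}) :
    Module.Free S (LinearMap.ker (∑ i ∈ Finset.range n, (σ ^ i).toLinearMap)) ∧
    Module.finrank S (LinearMap.ker (∑ i ∈ Finset.range n, (σ ^ i).toLinearMap)) = n - 1 :=
  statement2_general S π hπ T n hn hrank hmax σ hσn hgen
end

section
/- Both short exact sequences of S-modules 0 → S·1 → T →^{1−σ⁻¹} ker(Tr_{T/S}) → 0 and 0 → ker(Tr_{T/S}) → T →^{Tr} S·1 → 0 split; in particular there is an S-module isomorphism T ≅ S ⊕ ker(Tr_{T/S}). -/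
/-!
Two facts about `σ` carry the proof. First, the trace is onto: the characters `σ̄ ^ i`
(`i < n`) of `𝔽_T` are distinct, hence linearly independent (Dedekind), so some `t` has
`Tr t ∉ (π)`, i.e. `Tr t` is a unit, and `θ = t / Tr t` has trace `1`. With `θ` in hand,
Noether's formula `x = ∑ᵢ (∑_{j<i} σʲ y) σⁱ θ` solves `x - σ x = y` whenever `Tr y = 0`, and
`y ↦ y θ` splits the trace. Second, the invariants `T^σ` are exactly `S`: by Artin's theorem
`[𝔽_T : 𝔽_T^σ̄] = n = [𝔽_T : 𝔽_S]`, so counting elements gives `𝔽_T^σ̄ = 𝔽_S`; thus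
`T^σ ⊆ S + π T^σ`, and Nakayama's lemma gives `T^σ = S`. The trace therefore lands in `S`, and
its splitting gives `T ≅ S × ker Tr`.
-/

open Finset IsLocalRing

lemma exists_sum_pow_smul_ne_zero {G F : Type*} [Group G] [Field F] [MulSemiringAction G F]
    [FaithfulSMul G F] {g : G} {n : ℕ} (hn : 0 < n) (hg : orderOf g = n) :
    ∃ z : F, ∑ i ∈ range n, g ^ i • z ≠ 0 := by
  let χ : Fin n → (F →* F) := fun i ↦ (MulSemiringAction.toRingHom G F (g ^ (i : ℕ))).toMonoidHom
  have hχ : Function.Injective χ := fun i j hij ↦ Fin.ext <|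
    pow_injOn_Iio_orderOf (by rw [Set.mem_Iio, hg]; exact i.2) (by rw [Set.mem_Iio, hg]; exact j.2)
      (toRingHom_injective G F (RingHom.ext fun z ↦ DFunLike.congr_fun hij z))
  have hli := (linearIndependent_monoidHom F F).comp χ hχ
  by_contra! h
  have := Fintype.linearIndependent_iff.1 hli (fun _ ↦ 1) (funext fun z ↦ by
    simpa [χ, Fin.sum_univ_eq_sum_range (fun i ↦ g ^ i • z)] using h z) ⟨0, hn⟩
  exact one_ne_zero this

lemma FixedPoints.mem_range_of_natCard_eq_pow {G k F : Type*} [Group G] [Finite G] [Field k]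
    [Field F] [Finite F] [MulSemiringAction G F] [FaithfulSMul G F] (ρ : k →+* F)
    (hρ : ∀ (g : G) (a : k), g • ρ a = ρ a) (hcard : Nat.card F = Nat.card k ^ Nat.card G)
    {x : F} (hx : ∀ g : G, g • x = x) : x ∈ Set.range ρ := by
  have := Fintype.ofFinite G
  set K := FixedPoints.subfield G F
  have hKF : Nat.card F = Nat.card K ^ Nat.card G := by
    rw [Module.natCard_eq_pow_finrank (K := K), FixedPoints.finrank_eq_card,
      Fintype.card_eq_nat_card]
  have hK : Nat.card k = Nat.card K :=
    Nat.pow_left_injective Nat.card_pos.ne' (hcard.symm.trans hKF)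
  let ρK : k → K := fun a ↦ ⟨ρ a, fun g ↦ hρ g a⟩
  have hρK : Function.Bijective ρK :=
    (Nat.bijective_iff_injective_and_card ρK).2
      ⟨fun a b h ↦ ρ.injective (congrArg Subtype.val h), hK⟩
  obtain ⟨a, ha⟩ := hρK.2 ⟨x, hx⟩
  exact ⟨a, congrArg Subtype.val ha⟩

lemma finrank_residueField_eq_finrank {S T : Type*} [CommRing S] [CommRing T] [Algebra S T]
    [IsLocalRing S] [IsLocalRing T] [IsLocalHom (algebraMap S T)] [Module.Finite S T]
    [Module.Free S T] (h : (maximalIdeal S).map (algebraMap S T) = maximalIdeal T) :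
    Module.finrank (ResidueField S) (ResidueField T) = Module.finrank S T := by
  have e := AddEquiv.toLinearEquiv (R := S ⧸ maximalIdeal S)
    (Ideal.quotEquivOfEq h).toAddEquiv ?_
  · rw [← finrank_quotient_map (R := S) (S := T)]
    exact e.finrank_eq.symm
  · intro r x
    obtain ⟨r, rfl⟩ := Ideal.Quotient.mk_surjective r
    obtain ⟨x, rfl⟩ := Ideal.Quotient.mk_surjective x
    rfl

section CyclicTrace

variable {S T : Type*} [CommRing S] [CommRing T] [Algebra S T] (σ : T ≃ₐ[S] T) (n : ℕ)

def cyclicTrace : T →ₗ[S] T := ∑ i ∈ range n, (σ ^ i).toLinearMap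

lemma cyclicTrace_apply (x : T) : cyclicTrace σ n x = ∑ i ∈ range n, (σ ^ i) x := by
  simp [cyclicTrace, LinearMap.sum_apply]

def additiveHilbert90 (θ : T) : T →ₗ[S] T :=
  ∑ i ∈ range n, LinearMap.mulRight S ((σ ^ i) θ) ∘ₗ ∑ j ∈ range i, (σ ^ j).toLinearMap

lemma additiveHilbert90_apply (θ y : T) :
    additiveHilbert90 σ n θ y = ∑ i ∈ range n, (∑ j ∈ range i, (σ ^ j) y) * (σ ^ i) θ := by
  simp [additiveHilbert90, LinearMap.sum_apply, sum_mul]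

variable {σ n}

lemma pow_apply_of_apply_eq {c : T} (hc : σ c = c) (i : ℕ) : (σ ^ i) c = c := by
  rw [AlgEquiv.coe_pow]
  exact Function.IsFixedPt.iterate hc i

lemma cyclicTrace_mul_of_apply_eq {c : T} (hc : σ c = c) (x : T) :
    cyclicTrace σ n (c * x) = c * cyclicTrace σ n x := by
  simp only [cyclicTrace_apply, map_mul, pow_apply_of_apply_eq hc, mul_sum]

lemma sum_range_pow_apply_succ (hσn : σ ^ n = 1) (x : T) :
    ∑ i ∈ range n, (σ ^ (i + 1)) x = ∑ i ∈ range n, (σ ^ i) x := by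
  have h := (sum_range_succ' (fun i ↦ (σ ^ i) x) n).symm.trans (sum_range_succ _ n)
  rwa [hσn, pow_zero, add_left_inj] at h

lemma apply_cyclicTrace (hσn : σ ^ n = 1) (x : T) : σ (cyclicTrace σ n x) = cyclicTrace σ n x := by
  simp only [cyclicTrace_apply, map_sum, ← AlgEquiv.mul_apply, ← pow_succ']
  exact sum_range_pow_apply_succ hσn x

lemma additiveHilbert90_sub_apply (hσn : σ ^ n = 1) {θ y : T} (hθ : cyclicTrace σ n θ = 1)
    (hy : cyclicTrace σ n y = 0) :
    additiveHilbert90 σ n θ y - σ (additiveHilbert90 σ n θ y) = y := by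
  set c : ℕ → T := fun i ↦ ∑ j ∈ range i, (σ ^ j) y
  have hc : ∀ i, σ (c i) = c (i + 1) - y := fun i ↦ by
    simp only [c, map_sum, ← AlgEquiv.mul_apply, ← pow_succ', sum_range_succ', pow_zero,
      AlgEquiv.one_apply, add_sub_cancel_right]
  have hcn : c n = 0 := by simpa [c, cyclicTrace_apply] using hy
  have hθ' : ∑ i ∈ range n, (σ ^ (i + 1)) θ = 1 := by
    rwa [sum_range_pow_apply_succ hσn, ← cyclicTrace_apply]
  have hc0 : c 0 = 0 := sum_range_zero _
  have hshift : ∑ i ∈ range n, c (i + 1) * (σ ^ (i + 1)) θ = ∑ i ∈ range n, c i * (σ ^ i) θ := by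
    have h := (sum_range_succ' (fun i ↦ c i * (σ ^ i) θ) n).symm.trans (sum_range_succ _ n)
    simpa only [hcn, hc0, zero_mul, add_zero] using h
  have hσx : σ (additiveHilbert90 σ n θ y) = additiveHilbert90 σ n θ y - y := calc
    σ (additiveHilbert90 σ n θ y) = ∑ i ∈ range n, σ (c i) * (σ ^ (i + 1)) θ := by
      simp only [additiveHilbert90_apply, map_sum, map_mul, pow_succ', AlgEquiv.mul_apply, c]
    _ = ∑ i ∈ range n, c (i + 1) * (σ ^ (i + 1)) θ - y * ∑ i ∈ range n, (σ ^ (i + 1)) θ := by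
      simp only [hc, sub_mul, sum_sub_distrib, mul_sum]
    _ = additiveHilbert90 σ n θ y - y := by rw [hshift, hθ', mul_one, additiveHilbert90_apply]
  rw [hσx, sub_sub_cancel]

lemma exists_section_sub_inv (hσn : σ ^ n = 1) {θ : T} (hθ : cyclicTrace σ n θ = 1) :
    ∃ s : LinearMap.ker (cyclicTrace σ n) →ₗ[S] T,
      ∀ y, ((LinearMap.id : T →ₗ[S] T) - (σ⁻¹).toLinearMap) (s y) = (y : T) := by
  -- `(1 - σ⁻¹) ∘ (-σ) = 1 - σ`
  refine ⟨-(σ.toLinearMap ∘ₗ additiveHilbert90 σ n θ ∘ₗ (LinearMap.ker _).subtype), fun y ↦ ?_⟩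
  have h := additiveHilbert90_sub_apply hσn hθ y.2
  simp only [LinearMap.sub_apply, LinearMap.neg_apply, LinearMap.comp_apply, map_neg] at h ⊢
  simp [AlgEquiv.aut_inv, h]

lemma exists_section_cyclicTrace {θ : T} (hθ : cyclicTrace σ n θ = 1) :
    ∃ s : LinearMap.range (Algebra.linearMap S T) →ₗ[S] T, ∀ y, cyclicTrace σ n (s y) = y := by
  refine ⟨LinearMap.mulRight S θ ∘ₗ Submodule.subtype _, ?_⟩
  rintro ⟨_, a, rfl⟩
  simp [cyclicTrace_mul_of_apply_eq (σ.commutes a), hθ]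

lemma nonempty_linearEquiv_prod_ker_cyclicTrace (hσn : σ ^ n = 1) {θ : T}
    (hθ : cyclicTrace σ n θ = 1) (hinj : Function.Injective (algebraMap S T))
    (hfix : ∀ x, σ x = x → x ∈ Set.range (algebraMap S T)) :
    Nonempty (T ≃ₗ[S] S × LinearMap.ker (cyclicTrace σ n)) := by
  set R := LinearMap.range (Algebra.linearMap S T)
  let g : T →ₗ[S] R := (cyclicTrace σ n).codRestrict R fun x ↦ hfix _ (apply_cyclicTrace hσn x)
  have hexact : Function.Exact (LinearMap.ker (cyclicTrace σ n)).subtype g := fun x ↦ by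
    rw [Submodule.coe_subtype, Subtype.range_coe, SetLike.mem_coe, LinearMap.mem_ker,
      ← Subtype.coe_inj]
    rfl
  obtain ⟨s, hs⟩ := exists_section_cyclicTrace (σ := σ) hθ
  have hgs : g ∘ₗ s = LinearMap.id := LinearMap.ext fun y ↦ Subtype.ext (hs y)
  let e := (hexact.splitSurjectiveEquiv (Submodule.injective_subtype _) ⟨s, hgs⟩).1
  exact ⟨e ≪≫ₗ LinearEquiv.prodComm S _ _ ≪≫ₗ
    (LinearEquiv.ofInjective (Algebra.linearMap S T) hinj).symm.prodCongr (LinearEquiv.refl _ _)⟩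

lemma exists_cyclicTrace_eq_one_of_isUnit (hσn : σ ^ n = 1) {t : T}
    (ht : IsUnit (cyclicTrace σ n t)) : ∃ θ, cyclicTrace σ n θ = 1 := by
  obtain ⟨u, hu⟩ := ht
  have hσu : σ (↑u⁻¹ : T) = ↑u⁻¹ := by
    refine Units.eq_inv_of_mul_eq_one_left ?_
    rw [hu, ← apply_cyclicTrace hσn t, ← hu, ← map_mul, Units.mul_inv, map_one]
  exact ⟨↑u⁻¹ * t, by rw [cyclicTrace_mul_of_apply_eq hσu, ← hu, Units.inv_mul]⟩

lemma mem_range_algebraMap_of_apply_eq [IsLocalRing S] [IsNoetherianRing S] [IsDomain T]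
    [Module.Finite S T] {π : S} (hπ : π ∈ maximalIdeal S) (hπT : algebraMap S T π ≠ 0)
    (hres : ∀ x, σ x = x → ∃ a, x - algebraMap S T a ∈ Ideal.span {algebraMap S T π})
    {x : T} (hx : σ x = x) : x ∈ Set.range (algebraMap S T) := by
  let M : Submodule S T := LinearMap.eqLocus σ.toLinearMap LinearMap.id
  suffices M ≤ LinearMap.range (Algebra.linearMap S T) from this hx
  refine Submodule.le_of_le_smul_of_le_jacobson_bot (I := Ideal.span {π})
    (IsNoetherian.noetherian M) ((Ideal.span_singleton_le_iff_mem _).2 hπ |>.trans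
      (maximalIdeal_le_jacobson _)) fun z (hz : σ z = z) ↦ ?_
  obtain ⟨a, ha⟩ := hres z hz
  obtain ⟨y, hy⟩ := Ideal.mem_span_singleton'.1 ha
  have hyM : σ y = y := by
    refine mul_right_cancel₀ hπT ?_
    conv_lhs => rw [← σ.commutes π, ← map_mul, hy]
    rw [map_sub, hz, σ.commutes, hy]
  rw [← sub_add_cancel z (algebraMap S T a), ← hy, mul_comm, ← Algebra.smul_def, add_comm]
  exact Submodule.add_mem_sup ⟨a, rfl⟩
    (Submodule.smul_mem_smul (Ideal.mem_span_singleton_self π) hyM)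

lemma orderOf_eq_of_forall_exists_pow_apply_sub_notMem {I : Ideal T} (hn : 0 < n)
    (hσn : σ ^ n = 1) (hgen : ∀ i, 0 < i → i < n → ∃ t, (σ ^ i) t - t ∉ I) : orderOf σ = n :=
  (orderOf_eq_iff hn).2 ⟨hσn, fun m hm hm0 h ↦ by
    obtain ⟨t, ht⟩ := hgen m hm0 hm
    simp [h] at ht⟩

end CyclicTrace

section ResidueField

variable {S T : Type*} [CommRing S] [CommRing T] [Algebra S T] [IsLocalRing T] {σ : T ≃ₐ[S] T}
  {n : ℕ}

lemma faithfulSMul_zpowers_residueField (hn : 0 < n) (hσn : σ ^ n = 1)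
    (hgen : ∀ i, 0 < i → i < n → ∃ t, (σ ^ i) t - t ∉ maximalIdeal T) :
    FaithfulSMul (Subgroup.zpowers σ) (ResidueField T) := by
  classical
  rw [faithfulSMul_iff]
  rintro ⟨g, hg⟩ htriv
  have hfin : IsOfFinOrder σ := isOfFinOrder_iff_pow_eq_one.2 ⟨n, hn, hσn⟩
  obtain ⟨i, hi, rfl⟩ := Finset.mem_image.1 (hfin.mem_zpowers_iff_mem_range_orderOf.1 hg)
  rw [Finset.mem_range, orderOf_eq_of_forall_exists_pow_apply_sub_notMem hn hσn hgen] at hi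
  rcases Nat.eq_zero_or_pos i with rfl | hi0
  · rfl
  obtain ⟨t, ht⟩ := hgen i hi0 hi
  refine absurd ?_ ht
  rw [← residue_eq_zero_iff, map_sub, sub_eq_zero]
  exact htriv (residue T t)

lemma exists_cyclicTrace_eq_one (hn : 0 < n) (hσn : σ ^ n = 1)
    (hgen : ∀ i, 0 < i → i < n → ∃ t, (σ ^ i) t - t ∉ maximalIdeal T) :
    ∃ θ, cyclicTrace σ n θ = 1 := by
  have := faithfulSMul_zpowers_residueField hn hσn hgen
  let g : Subgroup.zpowers σ := ⟨σ, Subgroup.mem_zpowers σ⟩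
  have hg : orderOf g = n := by
    rw [Subgroup.orderOf_mk, orderOf_eq_of_forall_exists_pow_apply_sub_notMem hn hσn hgen]
  obtain ⟨z, hz⟩ := exists_sum_pow_smul_ne_zero (F := ResidueField T) hn hg
  obtain ⟨t, rfl⟩ := residue_surjective z
  refine exists_cyclicTrace_eq_one_of_isUnit hσn (t := t) ?_
  rw [← residue_ne_zero_iff_isUnit, cyclicTrace_apply, map_sum]
  exact hz

lemma exists_sub_algebraMap_mem_maximalIdeal [IsLocalRing S] [IsLocalHom (algebraMap S T)]
    [Module.Finite S T] [Module.Free S T] [Finite (ResidueField S)]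
    (hmap : (maximalIdeal S).map (algebraMap S T) = maximalIdeal T) (hn : 0 < n)
    (hrank : Module.finrank S T = n) (hσn : σ ^ n = 1)
    (hgen : ∀ i, 0 < i → i < n → ∃ t, (σ ^ i) t - t ∉ maximalIdeal T) {x : T} (hx : σ x = x) :
    ∃ a, x - algebraMap S T a ∈ maximalIdeal T := by
  have := faithfulSMul_zpowers_residueField hn hσn hgen
  have : Finite (Subgroup.zpowers σ) :=
    (isOfFinOrder_iff_pow_eq_one.2 ⟨n, hn, hσn⟩).finite_zpowers
  have : Finite (ResidueField T) := ResidueField.finite_of_finite ‹_›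
  have hcard : Nat.card (ResidueField T) =
      Nat.card (ResidueField S) ^ Nat.card (Subgroup.zpowers σ) := by
    rw [Module.natCard_eq_pow_finrank (K := ResidueField S), finrank_residueField_eq_finrank hmap,
      hrank, Nat.card_zpowers, orderOf_eq_of_forall_exists_pow_apply_sub_notMem hn hσn hgen]
  have hρ : ∀ (g : Subgroup.zpowers σ) (c : ResidueField S),
      g • algebraMap (ResidueField S) (ResidueField T) c = algebraMap _ _ c := by
    intro g c
    obtain ⟨a, rfl⟩ := residue_surjective c
    exact congrArg (residue T) ((g : T ≃ₐ[S] T).commutes a)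
  have hxres : ∀ g : Subgroup.zpowers σ, g • residue T x = residue T x := by
    rintro ⟨g, hg⟩
    exact congrArg (residue T)
      (Subgroup.zpowers_le.2 (show σ ∈ MulAction.stabilizer _ x from hx) hg)
  obtain ⟨c, hc⟩ := FixedPoints.mem_range_of_natCard_eq_pow _ hρ hcard hxres
  obtain ⟨a, rfl⟩ := residue_surjective c
  refine ⟨a, ?_⟩
  rw [← residue_eq_zero_iff, map_sub, ← hc, ResidueField.algebraMap_residue, sub_self]

end ResidueField

theorem statement3_general
    (S : Type*) [CommRing S] [IsDomain S] [IsDiscreteValuationRing S]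
    (π : S) (hπ : Irreducible π)
    [Finite (S ⧸ Ideal.span {π})]
    (T : Type*) [CommRing T] [IsDomain T] [IsDiscreteValuationRing T]
    [Algebra S T] [Module.Free S T]
    (n : ℕ) (hn : 1 ≤ n) (hrank : Module.finrank S T = n)
    (hmax : IsLocalRing.maximalIdeal T = Ideal.span {algebraMap S T π})
    (σ : T ≃ₐ[S] T) (hσn : σ ^ n = 1)
    (hgen : ∀ i : ℕ, 0 < i → i < n →
      ∃ t : T, (σ ^ i) t - t ∉ Ideal.span {algebraMap S T π}) :
    (∃ s₁ : LinearMap.ker (∑ i ∈ Finset.range n, (σ ^ i).toLinearMap) →ₗ[S] T,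
      ∀ y : LinearMap.ker (∑ i ∈ Finset.range n, (σ ^ i).toLinearMap),
        ((LinearMap.id : T →ₗ[S] T) - (σ⁻¹).toLinearMap) (s₁ y) = (y : T)) ∧
    (∃ s₂ : LinearMap.range (Algebra.linearMap S T) →ₗ[S] T,
      ∀ y : LinearMap.range (Algebra.linearMap S T),
        (∑ i ∈ Finset.range n, (σ ^ i).toLinearMap) (s₂ y) = (y : T)) ∧
    Nonempty (T ≃ₗ[S]
      S × LinearMap.ker (∑ i ∈ Finset.range n, (σ ^ i).toLinearMap)) := by
  have : Module.Finite S T := Module.finite_of_finrank_pos (hrank ▸ hn)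
  have : Finite (ResidueField S) := by rw [ResidueField, hπ.maximalIdeal_eq]; assumption
  have hmap : (maximalIdeal S).map (algebraMap S T) = maximalIdeal T := by
    rw [hπ.maximalIdeal_eq, Ideal.map_span, Set.image_singleton, hmax]
  rw [← hmax] at hgen
  have hinj := FaithfulSMul.algebraMap_injective S T
  have hπT : algebraMap S T π ≠ 0 := (map_ne_zero_iff _ hinj).2 hπ.ne_zero
  obtain ⟨θ, hθ⟩ := exists_cyclicTrace_eq_one hn hσn hgen
  have hfix : ∀ x, σ x = x → x ∈ Set.range (algebraMap S T) :=
    fun x ↦ mem_range_algebraMap_of_apply_eq (hπ.maximalIdeal_eq ▸ Ideal.mem_span_singleton_self π)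
      hπT fun y hy ↦ hmax ▸ exists_sub_algebraMap_mem_maximalIdeal hmap hn hrank hσn hgen hy
  exact ⟨exists_section_sub_inv hσn hθ, exists_section_cyclicTrace hθ,
    nonempty_linearEquiv_prod_ker_cyclicTrace hσn hθ hinj hfix⟩

/-- In the unramified setting (`S` a complete DVR with uniformizer `π` and
finite residue field, `T` an `S`-algebra DVR, finite free of rank `n ≥ 1` over `S` with maximal
ideal generated by the image of `π`, and `σ` an `S`-algebra automorphism with `σ ^ n = 1` whose
reduction mod `π` generates the Galois group of the residue extension), both short exact
sequences of `S`-modules `0 → S·1 → T →(1-σ⁻¹) ker Tr → 0` and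
`0 → ker Tr → T →Tr S·1 → 0` split: the maps `1 - σ⁻¹ : T → ker Tr` and `Tr : T → S·1`
admit `S`-linear sections; in particular `T ≅ S ⊕ ker Tr` as `S`-modules. -/
theorem statement3
    (S : Type*) [CommRing S] [IsDomain S] [IsDiscreteValuationRing S]
    (π : S) (hπ : Irreducible π)
    [IsAdicComplete (Ideal.span {π}) S] [Finite (S ⧸ Ideal.span {π})]
    (T : Type*) [CommRing T] [IsDomain T] [IsDiscreteValuationRing T]
    [Algebra S T] [Module.Free S T]
    (n : ℕ) (hn : 1 ≤ n) (hrank : Module.finrank S T = n)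
    (hmax : IsLocalRing.maximalIdeal T = Ideal.span {algebraMap S T π})
    (σ : T ≃ₐ[S] T) (hσn : σ ^ n = 1)
    (hgen : ∀ i : ℕ, 0 < i → i < n →
      ∃ t : T, (σ ^ i) t - t ∉ Ideal.span {algebraMap S T π}) :
    (∃ s₁ : LinearMap.ker (∑ i ∈ Finset.range n, (σ ^ i).toLinearMap) →ₗ[S] T,
      ∀ y : LinearMap.ker (∑ i ∈ Finset.range n, (σ ^ i).toLinearMap),
        ((LinearMap.id : T →ₗ[S] T) - (σ⁻¹).toLinearMap) (s₁ y) = (y : T)) ∧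
    (∃ s₂ : LinearMap.range (Algebra.linearMap S T) →ₗ[S] T,
      ∀ y : LinearMap.range (Algebra.linearMap S T),
        (∑ i ∈ Finset.range n, (σ ^ i).toLinearMap) (s₂ y) = (y : T)) ∧
    Nonempty (T ≃ₗ[S]
      S × LinearMap.ker (∑ i ∈ Finset.range n, (σ ^ i).toLinearMap)) :=
  statement3_general S π hπ T n hn hrank hmax σ hσn hgen
end

section
/- There is an S-module isomorphism T / (π · ker(Tr_{T/S})) ≅ S ⊕ 𝔽_S^{⊕(n−1)}, where π·ker(Tr_{T/S}) denotes the S-submodule of T consisting of π times elements of trace zero. -/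
/-!
The trace `Tr = ∑ σ^i` is nonzero by Dedekind's independence of characters, and its values
are `σ`-invariant. Since `σ` has order `n = [T : S]`, the extension of fraction fields is Galois
with group `⟨σ⟩`, so `σ`-invariant elements of the integrally closed `T` lie in `S`. Hence
`Tr` is an `S`-linear map onto a nonzero ideal of the PID `S`, and `T ⧸ ker Tr ≅ S`. Splitting
`0 → ker Tr → T → S → 0` gives `T ⧸ π • ker Tr ≅ (ker Tr ⧸ π • ker Tr) × S`, and `ker Tr` is
free of rank `n - 1`.
-/

open Pointwise

section LinearAlgebra

variable {R M : Type*} [CommRing R] [AddCommGroup M] [Module R M]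

theorem LinearMap.nonempty_quotKer_equiv_of_range_le [IsDomain R] [IsPrincipalIdealRing R]
    {N : Type*} [AddCommGroup N] [Module R N] {f : M →ₗ[R] N} (hf : f ≠ 0) {j : R →ₗ[R] N}
    (hj : Function.Injective j) (h : range f ≤ range j) :
    Nonempty ((M ⧸ ker f) ≃ₗ[R] R) := by
  set I : Ideal R := (range f).comap j
  have hI : Submodule.map j I = range f := Submodule.map_comap_eq_of_le h
  obtain ⟨a, ha⟩ := Submodule.IsPrincipal.principal I
  have ha0 : a ≠ 0 := by
    rintro rfl
    rw [ha, Submodule.span_zero_singleton, Submodule.map_bot, eq_comm, range_eq_bot] at hI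
    exact hf hI
  exact ⟨f.quotKerEquivRange ≪≫ₗ .ofEq _ _ hI.symm ≪≫ₗ (Submodule.equivMapOfInjective j hj I).symm
    ≪≫ₗ .ofEq _ _ ha ≪≫ₗ (LinearEquiv.toSpanNonzeroSingleton R R a ha0).symm⟩

noncomputable def Submodule.quotientSMulEquivOfLeftInverse (K : Submodule R M) (a : R)
    (l : M →ₗ[R] K) (hl : l ∘ₗ K.subtype = .id) :
    (M ⧸ a • K) ≃ₗ[R] QuotSMulTop a K × (M ⧸ K) := by
  let φ : M →ₗ[R] QuotSMulTop a K × (M ⧸ K) := ((a • ⊤ : Submodule R K).mkQ ∘ₗ l).prod K.mkQ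
  have hl' : ∀ k : K, l k = k := fun k => LinearMap.congr_fun hl k
  have hker : LinearMap.ker φ = a • K := by
    have hK : a • K = (a • ⊤ : Submodule R K).map K.subtype := by
      rw [Submodule.map_pointwise_smul, Submodule.map_subtype_top]
    ext x
    simp only [φ, LinearMap.ker_prod, Submodule.ker_mkQ, Submodule.mem_inf, LinearMap.mem_ker,
      LinearMap.comp_apply, Submodule.mkQ_apply, Submodule.Quotient.mk_eq_zero]
    rw [hK, Submodule.mem_map]
    constructor
    · rintro ⟨hlx, hx⟩
      exact ⟨⟨x, hx⟩, by rwa [← hl' ⟨x, hx⟩], rfl⟩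
    · rintro ⟨k, hk, rfl⟩
      exact ⟨by rwa [Submodule.subtype_apply, hl'], k.2⟩
  have hsurj : Function.Surjective φ := by
    rintro ⟨y, z⟩
    obtain ⟨k, rfl⟩ := Submodule.mkQ_surjective _ y
    obtain ⟨m, rfl⟩ := K.mkQ_surjective z
    refine ⟨k + (m - l m), ?_⟩
    have hk : (Submodule.Quotient.mk (k : M) : M ⧸ K) = 0 :=
      (Submodule.Quotient.mk_eq_zero K).2 k.2
    have hlm : (Submodule.Quotient.mk (l m : M) : M ⧸ K) = 0 :=
      (Submodule.Quotient.mk_eq_zero K).2 (l m).2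
    simp [φ, hl', hk, hlm]
  exact (Submodule.quotEquivOfEq _ _ hker.symm).trans (φ.quotKerEquivOfSurjective hsurj)

noncomputable def Module.Basis.quotSMulTopEquivPi {ι : Type*} [Fintype ι] [DecidableEq ι]
    (b : Module.Basis ι R M) (a : R) : QuotSMulTop a M ≃ₗ[R] (ι → R ⧸ Ideal.span {a}) :=
  QuotSMulTop.congr a b.equivFun ≪≫ₗ QuotSMulTop.equivQuotTensor a _ ≪≫ₗ
    TensorProduct.piScalarRight R R (R ⧸ Ideal.span {a}) ι

theorem Submodule.nonempty_quotient_smul_equiv [IsDomain R] [IsPrincipalIdealRing R]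
    [Module.Free R M] [Module.Finite R M] {n : ℕ} (hrank : Module.finrank R M = n)
    (K : Submodule R M) (e : (M ⧸ K) ≃ₗ[R] R) (a : R) :
    Nonempty ((M ⧸ a • K) ≃ₗ[R] R × (Fin (n - 1) → R ⧸ Ideal.span {a})) := by
  have : Module.Projective R (M ⧸ K) := .of_equiv e.symm
  obtain ⟨s, hs⟩ := Module.projective_lifting_property K.mkQ .id K.mkQ_surjective
  have hsection_iff_retraction :=
    ((LinearMap.exact_subtype_mkQ K).split_tfae K.injective_subtype K.mkQ_surjective).out 0 1
  obtain ⟨l, hl⟩ := hsection_iff_retraction.mp ⟨s, hs⟩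
  have hK : Module.finrank R K = n - 1 := by
    have := K.finrank_quotient_add_finrank
    rw [e.finrank_eq, Module.finrank_self] at this
    omega
  let b := Module.finBasisOfFinrankEq R K hK
  exact ⟨K.quotientSMulEquivOfLeftInverse a l hl ≪≫ₗ (b.quotSMulTopEquivPi a).prodCongr e ≪≫ₗ
    LinearEquiv.prodComm R _ _⟩

end LinearAlgebra

section Galois

open Finset

theorem AlgEquiv.sum_range_orderOf_pow_ne_zero {R A : Type*} [CommSemiring R] [CommRing A]
    [IsDomain A] [Algebra R A] (σ : A ≃ₐ[R] A) (hσ : IsOfFinOrder σ) :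
    ∑ i ∈ range (orderOf σ), (σ ^ i).toLinearMap ≠ 0 := by
  intro h
  let χ : Fin (orderOf σ) → (A →* A) := fun i => (σ ^ (i : ℕ) : A ≃ₐ[R] A).toMonoidHom
  have hχ : Function.Injective χ := fun i j hij =>
    Fin.ext (pow_injOn_Iio_orderOf i.2 j.2 (AlgEquiv.ext fun a => DFunLike.congr_fun hij a))
  have hli := Fintype.linearIndependent_iff.mp ((linearIndependent_monoidHom A A).comp χ hχ)
    (fun _ => 1) (funext fun a => by
      have := DFunLike.congr_fun h a
      rw [LinearMap.sum_apply, ← Fin.sum_univ_eq_sum_range] at this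
      simpa [χ] using this)
  exact one_ne_zero (hli ⟨0, hσ.orderOf_pos⟩)

theorem AlgEquiv.apply_sum_range_pow {R A : Type*} [CommSemiring R] [Ring A] [Algebra R A]
    (σ : A ≃ₐ[R] A) {n : ℕ} (hσ : σ ^ n = 1) (a : A) :
    σ (∑ i ∈ range n, (σ ^ i) a) = ∑ i ∈ range n, (σ ^ i) a := by
  have h := sum_range_succ' (fun i => (σ ^ i) a) n
  rw [sum_range_succ, hσ, pow_zero] at h
  rw [map_sum]
  simp_rw [← AlgEquiv.mul_apply, ← pow_succ']
  exact (add_right_cancel h).symm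

theorem AlgEquiv.exists_algebraMap_eq_of_apply_eq_self {S T : Type*} [CommRing S] [IsDomain S]
    [IsIntegrallyClosed S] [CommRing T] [IsDomain T] [IsIntegrallyClosed T] [Algebra S T]
    [Module.Finite S T] [FaithfulSMul S T] (σ : T ≃ₐ[S] T)
    (hσ : orderOf σ = Module.finrank S T) {z : T} (hz : σ z = z) :
    ∃ s : S, algebraMap S T s = z := by
  let K := FractionRing S
  let L := FractionRing T
  let := FractionRing.liftAlgebra S L
  have : IsIntegralClosure T S L := IsIntegralClosure.of_isIntegrallyClosed T S L
  have hKL : Module.finrank K L = Module.finrank S T := IsFractionRing.finrank_eq S K T L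
  have hcard : Nat.card Gal(L/K) = Nat.card (T ≃ₐ[S] T) :=
    Nat.card_congr (galRestrict S K L T).toEquiv
  have hle : Nat.card Gal(L/K) ≤ Module.finrank K L := by
    rw [Nat.card_eq_fintype_card]
    exact AlgEquiv.card_le
  have : Finite (T ≃ₐ[S] T) := Finite.of_equiv _ (galRestrict S K L T).toEquiv
  have hge : orderOf σ ≤ Nat.card (T ≃ₐ[S] T) := orderOf_le_card
  have : IsGalois K L := IsGalois.of_card_aut_eq_finrank K L (by omega)
  have htop : Subgroup.zpowers σ = ⊤ :=
    Subgroup.eq_top_of_card_eq _ (by rw [Nat.card_zpowers]; omega)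
  refine (Algebra.isInvariant_of_isGalois' S K L T).isInvariant z fun g => ?_
  have hg : g ∈ MulAction.stabilizer (T ≃ₐ[S] T) z :=
    Subgroup.zpowers_le.mpr hz (htop ▸ Subgroup.mem_top g)
  exact hg

end Galois

theorem statement4_general
    (S : Type*) [CommRing S] [IsDomain S] [IsDiscreteValuationRing S]
    (π : S)
    (T : Type*) [CommRing T] [IsDomain T] [IsDiscreteValuationRing T]
    [Algebra S T] [Module.Free S T]
    (n : ℕ) (hn : 1 ≤ n) (hrank : Module.finrank S T = n)
    (σ : T ≃ₐ[S] T) (hσn : σ ^ n = 1)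
    (hgen : ∀ i : ℕ, 0 < i → i < n →
      ∃ t : T, (σ ^ i) t - t ∉ Ideal.span {algebraMap S T π}) :
    Nonempty ((T ⧸ (π • LinearMap.ker (∑ i ∈ Finset.range n, (σ ^ i).toLinearMap))) ≃ₗ[S]
      S × (Fin (n - 1) → S ⧸ Ideal.span {π})) := by
  have : Module.Finite S T := Module.finite_of_finrank_pos (by omega)
  have hord : orderOf σ = n := by
    refine (orderOf_eq_iff (by omega)).mpr ⟨hσn, fun i hin hi hσi => ?_⟩
    obtain ⟨t, ht⟩ := hgen i hi hin
    simp [hσi] at ht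
  have hTr : ∑ i ∈ Finset.range n, (σ ^ i).toLinearMap ≠ 0 :=
    hord ▸ σ.sum_range_orderOf_pow_ne_zero (isOfFinOrder_iff_pow_eq_one.mpr ⟨n, hn, hσn⟩)
  have hrange : LinearMap.range (∑ i ∈ Finset.range n, (σ ^ i).toLinearMap) ≤
      LinearMap.range (Algebra.linearMap S T) := by
    rintro _ ⟨t, rfl⟩
    refine σ.exists_algebraMap_eq_of_apply_eq_self (hord.trans hrank.symm) ?_
    simpa using σ.apply_sum_range_pow hσn t
  obtain ⟨e⟩ := LinearMap.nonempty_quotKer_equiv_of_range_le hTr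
    (FaithfulSMul.algebraMap_injective S T) hrange
  exact Submodule.nonempty_quotient_smul_equiv hrank _ e π

/-- In the unramified setting (`S` a complete DVR with uniformizer `π` and
finite residue field `𝔽_S = S/(π)`, `T` an `S`-algebra DVR, finite free of rank `n ≥ 1` over
`S` with maximal ideal generated by the image of `π`, and `σ` an `S`-algebra automorphism with
`σ ^ n = 1` whose reduction mod `π` generates the Galois group of the residue extension), there
is an `S`-module isomorphism `T / (π · ker Tr) ≅ S ⊕ 𝔽_S^(n-1)`, where `π · ker Tr` is the
`S`-submodule of `T` of elements `π · t` with `Tr t = 0`. -/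
theorem statement4
    (S : Type*) [CommRing S] [IsDomain S] [IsDiscreteValuationRing S]
    (π : S) (hπ : Irreducible π)
    [IsAdicComplete (Ideal.span {π}) S] [Finite (S ⧸ Ideal.span {π})]
    (T : Type*) [CommRing T] [IsDomain T] [IsDiscreteValuationRing T]
    [Algebra S T] [Module.Free S T]
    (n : ℕ) (hn : 1 ≤ n) (hrank : Module.finrank S T = n)
    (hmax : IsLocalRing.maximalIdeal T = Ideal.span {algebraMap S T π})
    (σ : T ≃ₐ[S] T) (hσn : σ ^ n = 1)
    (hgen : ∀ i : ℕ, 0 < i → i < n →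
      ∃ t : T, (σ ^ i) t - t ∉ Ideal.span {algebraMap S T π}) :
    Nonempty ((T ⧸ (π • LinearMap.ker (∑ i ∈ Finset.range n, (σ ^ i).toLinearMap))) ≃ₗ[S]
      S × (Fin (n - 1) → S ⧸ Ideal.span {π})) :=
  statement4_general S π T n hn hrank σ hσn hgen
end

section
/- The image of the S-linear endomorphism t ↦ π·(t − σ⁻¹(t)) of T equals π·ker(Tr_{T/S}), and the quotient S-module ker(Tr_{T/S}) / (π·ker(Tr_{T/S})) is isomorphic to 𝔽_S^{⊕(n−1)}. -/
/-!
Reducing modulo `π`, `σ` induces an automorphism `σ̄` of the residue field `𝔽_T` of order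
`n = [𝔽_T : 𝔽_S]`, so by Artin's theorem its fixed field is `𝔽_S`, and by Dedekind's independence
of characters `∑ σ̄ⁱ` is not zero. Lifting gives `θ ∈ T` with `Tr θ` a unit, and the additive
Hilbert 90 construction then shows `ker Tr = im (1 - σ⁻¹)`. Nakayama's lemma lifts
"the `σ̄`-fixed elements are scalars" to `ker (1 - σ⁻¹) = S·1`, so by rank–nullity the free
`S`-module `ker Tr` has rank `n - 1`, whence `ker Tr / π ker Tr ≅ 𝔽_S^(n-1)`.
-/

open Pointwise

open Finset IsLocalRing

universe u

theorem LinearMap.range_smul_eq_smul_range {R M N : Type*} [CommSemiring R] [AddCommMonoid M]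
    [Module R M] [AddCommMonoid N] [Module R N] (f : M →ₗ[R] N) (a : R) :
    range (a • f) = a • range f :=
  range_comp f (DistribSMul.toLinearMap R N a)

theorem LinearMap.finrank_range_add_finrank_ker_of_hasRankNullity {R : Type*} {M : Type u}
    {N : Type*} [Ring R] [StrongRankCondition R] [HasRankNullity.{u} R] [AddCommGroup M]
    [Module R M] [AddCommGroup N] [Module R N] [Module.Finite R M] (f : M →ₗ[R] N) :
    Module.finrank R (range f) + Module.finrank R (ker f) = Module.finrank R M := by
  rw [← f.quotKerEquivRange.finrank_eq, Submodule.finrank_quotient_add_finrank]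

theorem LinearMap.ker_le_of_le_sup_smul_top {R M : Type*} [CommRing R] [AddCommGroup M]
    [Module R M] [IsNoetherian R M] {π : R} (hπ : π ∈ (⊥ : Ideal R).jacobson)
    (hreg : IsSMulRegular M π) {f : M →ₗ[R] M} {N : Submodule R M} (hN : N ≤ ker f)
    (h : ker f ≤ N ⊔ π • ⊤) : ker f ≤ N := by
  refine Submodule.le_of_le_smul_of_le_jacobson_bot (IsNoetherian.noetherian _)
    ((Ideal.span_singleton_le_iff_mem _).mpr hπ) fun m hm => ?_
  obtain ⟨n, hn, _, ⟨b, -, rfl⟩, rfl⟩ := Submodule.mem_sup.mp (h hm)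
  have hb : f b = 0 := hreg <| by
    have hm' : f n + π • f b = 0 := by rw [← map_smul, ← map_add]; exact hm
    rw [hN hn, zero_add] at hm'
    exact hm'.trans (smul_zero π).symm
  exact Submodule.add_mem_sup hn (Submodule.smul_mem_smul (Ideal.mem_span_singleton_self π) hb)

noncomputable def Module.Basis.quotientSMulTopEquiv {R M ι : Type*} [CommRing R]
    [AddCommGroup M] [Module R M] [Fintype ι] [DecidableEq ι] (b : Module.Basis ι R M) (a : R) :
    (M ⧸ (a • ⊤ : Submodule R M)) ≃ₗ[R] (ι → R ⧸ Ideal.span {a}) :=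
  (Submodule.quotEquivOfEq _ _ (Submodule.ideal_span_singleton_smul a ⊤)).symm ≪≫ₗ
    (TensorProduct.tensorQuotEquivQuotSMul M _).symm ≪≫ₗ
    TensorProduct.congr b.equivFun (LinearEquiv.refl R _) ≪≫ₗ
    TensorProduct.comm R _ _ ≪≫ₗ TensorProduct.piScalarRight R R _ ι

theorem IsLocalRing.finrank_quotient_of_eq_map {R A : Type*} [CommRing R] [IsLocalRing R]
    [CommRing A] [Algebra R A] [Module.Free R A] [Module.Finite R A] (P : Ideal A)
    [P.LiesOver (maximalIdeal R)] (hP : P = (maximalIdeal R).map (algebraMap R A)) :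
    Module.finrank (R ⧸ maximalIdeal R) (A ⧸ P) = Module.finrank R A := by
  subst hP
  exact finrank_quotient_map

namespace AlgEquiv

theorem exists_sum_pow_orderOf_apply_ne_zero {K E : Type*} [CommSemiring K] [Field E]
    [Algebra K E] (g : E ≃ₐ[K] E) (hg : 0 < orderOf g) :
    ∃ x, ∑ i ∈ range (orderOf g), (g ^ i) x ≠ 0 := by
  have hli : LinearIndependent E fun i : Fin (orderOf g) =>
      ((g ^ (i : ℕ) : E ≃ₐ[K] E) : E →ₐ[K] E).toLinearMap :=
    (linearIndependent_toLinearMap K E E).comp _ fun i j hij =>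
      Fin.ext (pow_injOn_Iio_orderOf i.2 j.2 (coe_toAlgHom_injective hij))
  by_contra! h
  refine one_ne_zero (Fintype.linearIndependent_iff.mp hli (fun _ => 1) ?_ ⟨0, hg⟩)
  ext x
  simpa only [LinearMap.sum_apply, LinearMap.smul_apply, one_smul, AlgHom.toLinearMap_apply,
    coe_toAlgHom, LinearMap.zero_apply, Fin.sum_univ_eq_sum_range (fun i => (g ^ i) x)] using h x

theorem mem_range_algebraMap_of_apply_eq {F E : Type*} [Field F] [Field E] [Algebra F E]
    [FiniteDimensional F E] (g : E ≃ₐ[F] E) (hg : orderOf g = Module.finrank F E) {x : E}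
    (hx : g x = x) : x ∈ Set.range (algebraMap F E) := by
  set K := IntermediateField.fixedField (Subgroup.zpowers g)
  have hxK : x ∈ K := by
    rw [IntermediateField.mem_fixedField_iff]
    rintro _ ⟨k, rfl⟩
    exact MulAction.mem_fixedBy_zpow (g := g) (a := x) hx k
  have hK : K = ⊥ := by
    rw [← IntermediateField.finrank_eq_one_iff,
      ← Nat.mul_left_inj (Module.finrank_pos (R := K) (M := E)).ne', Module.finrank_mul_finrank,
      IntermediateField.finrank_fixedField_eq_card, Nat.card_zpowers, hg, one_mul]
  rw [hK] at hxK
  exact IntermediateField.mem_bot.mp hxK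

variable {R A : Type*} [CommSemiring R] [CommRing A] [Algebra R A] {σ : A ≃ₐ[R] A} {n : ℕ}

theorem sum_pow_succ_apply (hσ : σ ^ n = 1) (a : A) :
    ∑ i ∈ range n, (σ ^ (i + 1)) a = ∑ i ∈ range n, (σ ^ i) a := by
  have h := (sum_range_succ' (fun i => (σ ^ i) a) n).symm.trans (sum_range_succ _ n)
  rwa [hσ, pow_zero, add_right_cancel_iff] at h

theorem sum_pow_apply_map (hσ : σ ^ n = 1) (a : A) :
    ∑ i ∈ range n, (σ ^ i) (σ a) = ∑ i ∈ range n, (σ ^ i) a := by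
  simp_rw [← mul_apply, ← pow_succ, sum_pow_succ_apply hσ]

theorem map_sum_pow_apply (hσ : σ ^ n = 1) (a : A) :
    σ (∑ i ∈ range n, (σ ^ i) a) = ∑ i ∈ range n, (σ ^ i) a := by
  simp_rw [map_sum, ← mul_apply, ← pow_succ', sum_pow_succ_apply hσ]

/-- Additive Hilbert 90, with the witness `w = u⁻¹ ∑_{i<n} sᵢ σⁱ θ`, where `u = ∑ σⁱ θ` and
`sᵢ = ∑_{j<i} σʲ a`. -/
theorem exists_sub_map_eq_of_sum_pow_eq_zero (hσ : σ ^ n = 1) {θ : A}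
    (hθ : IsUnit (∑ i ∈ range n, (σ ^ i) θ)) {a : A} (ha : ∑ i ∈ range n, (σ ^ i) a = 0) :
    ∃ w, w - σ w = a := by
  set s : ℕ → A := fun i => ∑ j ∈ range i, (σ ^ j) a
  have hs (i : ℕ) : σ (s i) = s (i + 1) - a := by
    simp only [s, map_sum, ← mul_apply, ← pow_succ', sum_range_succ' _ i, pow_zero, one_apply,
      add_sub_cancel_right]
  set b := ∑ i ∈ range n, s i * (σ ^ i) θ
  have hb : σ b = b - a * ∑ i ∈ range n, (σ ^ i) θ := by
    have hshift : ∑ i ∈ range n, s (i + 1) * (σ ^ (i + 1)) θ = b := by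
      have h := (sum_range_succ' (fun i => s i * (σ ^ i) θ) n).symm.trans (sum_range_succ _ n)
      rwa [show s 0 = 0 from sum_range_zero _, show s n = 0 from ha, zero_mul, zero_mul,
        add_zero, add_zero] at h
    simp only [b, map_sum, map_mul, hs, ← mul_apply, ← pow_succ', sub_mul, sum_sub_distrib,
      ← mul_sum, sum_pow_succ_apply hσ, hshift]
  obtain ⟨u, hu⟩ := hθ
  have hσu : σ ↑u⁻¹ = ↑u⁻¹ := by
    have h := congrArg σ u.inv_mul
    rw [map_mul, map_one, hu, map_sum_pow_apply hσ, ← hu] at h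
    exact Units.eq_inv_of_mul_eq_one_right h
  refine ⟨↑u⁻¹ * b, ?_⟩
  rw [map_mul, hσu, hb, ← hu, mul_sub, mul_left_comm, Units.inv_mul, mul_one, sub_sub_cancel]

theorem range_id_sub_inv_eq_ker_sum_pow (hσ : σ ^ n = 1) {θ : A}
    (hθ : IsUnit (∑ i ∈ range n, (σ ^ i) θ)) :
    LinearMap.range (LinearMap.id - σ⁻¹.toLinearMap) =
      LinearMap.ker (∑ i ∈ range n, (σ ^ i).toLinearMap) := by
  have hsum (a : A) : (∑ i ∈ range n, (σ ^ i).toLinearMap) a = ∑ i ∈ range n, (σ ^ i) a :=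
    LinearMap.sum_apply ..
  apply le_antisymm
  · rintro _ ⟨t, rfl⟩
    have h := sum_pow_apply_map hσ (σ⁻¹ t)
    rw [aut_inv, apply_symm_apply] at h
    rw [LinearMap.mem_ker, LinearMap.sub_apply, map_sub, hsum, hsum, LinearMap.id_apply,
      toLinearMap_apply, aut_inv, h, sub_self]
  · intro a ha
    obtain ⟨w, rfl⟩ := exists_sub_map_eq_of_sum_pow_eq_zero hσ hθ (by rwa [← hsum])
    refine ⟨-σ w, ?_⟩
    simp [aut_inv, sub_eq_add_neg, add_comm]

end AlgEquiv

namespace IsLocalRing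

open ResidueField

variable {S T : Type*} [CommRing S] [IsLocalRing S] [CommRing T] [IsLocalRing T] [Algebra S T]
  [IsLocalHom (algebraMap S T)]

theorem ResidueField.mapAlgEquiv'_pow_residue (σ : T ≃ₐ[S] T) (i : ℕ) (t : T) :
    (mapAlgEquiv' σ ^ i) (residue T t) = residue T ((σ ^ i) t) := by
  induction i generalizing t with
  | zero => rfl
  | succ i ih => rw [pow_succ, AlgEquiv.mul_apply, mapAlgEquiv'_residue, ih, pow_succ,
      AlgEquiv.mul_apply]

theorem ResidueField.orderOf_mapAlgEquiv' {σ : T ≃ₐ[S] T} {n : ℕ} (hn : 0 < n) (hσ : σ ^ n = 1)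
    (hσ' : ∀ i : ℕ, 0 < i → i < n → ∃ t : T, (σ ^ i) t - t ∉ maximalIdeal T) :
    orderOf (mapAlgEquiv' σ) = n := by
  refine (orderOf_eq_iff hn).mpr ⟨AlgEquiv.ext fun x => ?_, fun i hi hi0 h => ?_⟩
  · obtain ⟨t, rfl⟩ := residue_surjective x
    rw [mapAlgEquiv'_pow_residue, hσ]
    rfl
  · obtain ⟨t, ht⟩ := hσ' i hi0 hi
    rw [← residue_eq_zero_iff, map_sub, sub_eq_zero, ← mapAlgEquiv'_pow_residue, h] at ht
    exact ht rfl

theorem exists_isUnit_sum_pow_apply {σ : T ≃ₐ[S] T} {n : ℕ} (hn : 0 < n)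
    (hσ : orderOf (mapAlgEquiv' σ) = n) : ∃ θ : T, IsUnit (∑ i ∈ range n, (σ ^ i) θ) := by
  subst hσ
  obtain ⟨x, hx⟩ := (mapAlgEquiv' σ).exists_sum_pow_orderOf_apply_ne_zero hn
  obtain ⟨θ, rfl⟩ := residue_surjective x
  refine ⟨θ, (residue_ne_zero_iff_isUnit _).mp ?_⟩
  simpa only [map_sum, mapAlgEquiv'_pow_residue] using hx

theorem ker_id_sub_inv_eq_range_algebraMap [IsNoetherianRing S] [Module.Finite S T] {π : S}
    (hπ : π ∈ maximalIdeal S) (hreg : IsSMulRegular T π)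
    (hmax : maximalIdeal T = Ideal.span {algebraMap S T π}) {σ : T ≃ₐ[S] T}
    (hσ : orderOf (mapAlgEquiv' σ) = Module.finrank (ResidueField S) (ResidueField T)) :
    LinearMap.ker (LinearMap.id - σ⁻¹.toLinearMap) = LinearMap.range (Algebra.linearMap S T) := by
  have hN : LinearMap.range (Algebra.linearMap S T) ≤
      LinearMap.ker (LinearMap.id - σ⁻¹.toLinearMap) := by
    rintro _ ⟨s, rfl⟩
    simp
  refine le_antisymm (LinearMap.ker_le_of_le_sup_smul_top
    (by rwa [jacobson_eq_maximalIdeal ⊥ bot_ne_top]) hreg hN fun t ht => ?_) hN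
  have hσt : σ t = t := by
    rw [LinearMap.mem_ker, LinearMap.sub_apply, sub_eq_zero, LinearMap.id_apply,
      AlgEquiv.toLinearMap_apply, AlgEquiv.aut_inv, eq_comm, AlgEquiv.symm_apply_eq] at ht
    exact ht.symm
  obtain ⟨x, hx⟩ := (mapAlgEquiv' σ).mem_range_algebraMap_of_apply_eq hσ
    (x := residue T t) (by rw [mapAlgEquiv'_residue, hσt])
  obtain ⟨s, rfl⟩ := residue_surjective x
  rw [algebraMap_residue, ← sub_eq_zero, ← map_sub, residue_eq_zero_iff, hmax,
    Ideal.mem_span_singleton'] at hx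
  obtain ⟨b, hb⟩ := hx
  refine Submodule.mem_sup.mpr
    ⟨_, ⟨s, rfl⟩, π • -b, Submodule.smul_mem_pointwise_smul _ _ _ trivial, ?_⟩
  rw [Algebra.smul_def, Algebra.linearMap_apply]
  linear_combination -hb

end IsLocalRing

theorem statement5_general
    (S : Type*) [CommRing S] [IsDomain S] [IsDiscreteValuationRing S]
    (π : S) (hπ : Irreducible π)
    (T : Type*) [CommRing T] [IsDomain T] [IsDiscreteValuationRing T]
    [Algebra S T] [Module.Free S T]
    (n : ℕ) (hn : 1 ≤ n) (hrank : Module.finrank S T = n)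
    (hmax : IsLocalRing.maximalIdeal T = Ideal.span {algebraMap S T π})
    (σ : T ≃ₐ[S] T) (hσn : σ ^ n = 1)
    (hgen : ∀ i : ℕ, 0 < i → i < n →
      ∃ t : T, (σ ^ i) t - t ∉ Ideal.span {algebraMap S T π}) :
    LinearMap.range (π • ((LinearMap.id : T →ₗ[S] T) - (σ⁻¹).toLinearMap)) =
      π • LinearMap.ker (∑ i ∈ Finset.range n, (σ ^ i).toLinearMap) ∧
    Nonempty ((LinearMap.ker (∑ i ∈ Finset.range n, (σ ^ i).toLinearMap) ⧸
        (π • (⊤ : Submodule S (LinearMap.ker (∑ i ∈ Finset.range n, (σ ^ i).toLinearMap)))))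
      ≃ₗ[S] (Fin (n - 1) → S ⧸ Ideal.span {π})) := by
  have : Module.Finite S T := Module.finite_of_finrank_pos (by omega)
  have hmax' : maximalIdeal T = (maximalIdeal S).map (algebraMap S T) := by
    rw [hmax, (IsDiscreteValuationRing.irreducible_iff_uniformizer π).mp hπ, Ideal.map_span,
      Set.image_singleton]
  have horder : orderOf (ResidueField.mapAlgEquiv' σ) = n :=
    ResidueField.orderOf_mapAlgEquiv' hn hσn (hmax ▸ hgen)
  obtain ⟨θ, hθ⟩ := exists_isUnit_sum_pow_apply hn horder
  have hrange := σ.range_id_sub_inv_eq_ker_sum_pow hσn hθ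
  have hker := ker_id_sub_inv_eq_range_algebraMap
    ((mem_maximalIdeal π).mpr hπ.not_isUnit) (IsSMulRegular.of_ne_zero hπ.ne_zero) hmax
    (horder.trans ((finrank_quotient_of_eq_map _ hmax').trans hrank).symm)
  have hfinrank : Module.finrank S (LinearMap.ker (∑ i ∈ range n, (σ ^ i).toLinearMap)) =
      n - 1 := by
    have h := (LinearMap.id - σ⁻¹.toLinearMap).finrank_range_add_finrank_ker_of_hasRankNullity
    rw [hrange, hker, LinearMap.finrank_range_of_inj (FaithfulSMul.algebraMap_injective S T),
      Module.finrank_self, hrank] at h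
    omega
  exact ⟨by rw [LinearMap.range_smul_eq_smul_range, hrange],
    ⟨(Module.finBasisOfFinrankEq S _ hfinrank).quotientSMulTopEquiv π⟩⟩

/-- In the unramified setting (`S` a complete DVR with uniformizer `π` and
finite residue field `𝔽_S = S/(π)`, `T` an `S`-algebra DVR, finite free of rank `n ≥ 1` over
`S` with maximal ideal generated by the image of `π`, and `σ` an `S`-algebra automorphism with
`σ ^ n = 1` whose reduction mod `π` generates the Galois group of the residue extension), the
image of the `S`-linear endomorphism `t ↦ π·(t - σ⁻¹ t)` of `T` equals `π · ker Tr`, and the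
quotient `S`-module `ker Tr / (π · ker Tr)` is isomorphic to `𝔽_S^(n-1)`. -/
theorem statement5
    (S : Type*) [CommRing S] [IsDomain S] [IsDiscreteValuationRing S]
    (π : S) (hπ : Irreducible π)
    [IsAdicComplete (Ideal.span {π}) S] [Finite (S ⧸ Ideal.span {π})]
    (T : Type*) [CommRing T] [IsDomain T] [IsDiscreteValuationRing T]
    [Algebra S T] [Module.Free S T]
    (n : ℕ) (hn : 1 ≤ n) (hrank : Module.finrank S T = n)
    (hmax : IsLocalRing.maximalIdeal T = Ideal.span {algebraMap S T π})
    (σ : T ≃ₐ[S] T) (hσn : σ ^ n = 1)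
    (hgen : ∀ i : ℕ, 0 < i → i < n →
      ∃ t : T, (σ ^ i) t - t ∉ Ideal.span {algebraMap S T π}) :
    LinearMap.range (π • ((LinearMap.id : T →ₗ[S] T) - (σ⁻¹).toLinearMap)) =
      π • LinearMap.ker (∑ i ∈ Finset.range n, (σ ^ i).toLinearMap) ∧
    Nonempty ((LinearMap.ker (∑ i ∈ Finset.range n, (σ ^ i).toLinearMap) ⧸
        (π • (⊤ : Submodule S (LinearMap.ker (∑ i ∈ Finset.range n, (σ ^ i).toLinearMap)))))
      ≃ₗ[S] (Fin (n - 1) → S ⧸ Ideal.span {π})) :=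
  statement5_general S π hπ T n hn hrank hmax σ hσn hgen
end

section
/- The kernel of the S-linear endomorphism t ↦ π·(t − σ⁻¹(t)) of T equals S·1 (the image of the structure map S → T); consequently, for every nonzero element c of S, the quotient of this kernel by the image of the S-linear map t ↦ c·Tr_{T/S}(t) is isomorphic to S/(c) as an S-module. (This computes the odd-degree homology of Larsen's small complex 0 ← T ←^{π(1−σ⁻¹)} T ←^{c·Tr} T ←^{π(1−σ⁻¹)} ⋯ .) -/
/-!
Since `T` is torsion-free, the kernel of `π (1 - σ⁻¹)` is the ring `T^σ` of `σ`-invariants.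
As `σ` has order exactly `n = [T : S]`, Artin's theorem makes `Frac S` the fixed field of `σ` on
`Frac T`, and `T^σ = S` because `S` is integrally closed. The trace `Σ σ^i` takes values in
`T^σ = S`, and it is onto: modulo `π` the powers `σ^i` (`i < n`) are distinct characters of `T`
with values in the residue field, so by Dedekind's independence of characters some element has
trace outside `(π)`, i.e. a unit trace. Hence the image of `c • Tr` in `S·1 ≅ S` is `c S`.
-/

open Module Finset IntermediateField

theorem IntermediateField.fixedField_zpowers_eq_bot {K L : Type*} [Field K] [Field L]
    [Algebra K L] [FiniteDimensional K L] {τ : L ≃ₐ[K] L} (hτ : orderOf τ = finrank K L) :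
    fixedField (Subgroup.zpowers τ) = ⊥ := by
  have hL := finrank_fixedField_eq_card (Subgroup.zpowers τ)
  rw [Nat.card_zpowers, hτ] at hL
  have htower := finrank_mul_finrank K (fixedField (Subgroup.zpowers τ)) L
  rw [hL] at htower
  exact finrank_eq_one_iff.mp <| (Nat.mul_eq_right finrank_pos.ne').mp htower

namespace AlgEquiv

variable {S T : Type*} [CommRing S] [CommRing T] [Algebra S T]

theorem exists_algebraMap_eq_of_apply_eq [IsDomain S] [IsIntegrallyClosed S] [IsDomain T]
    [Module.Free S T] [Module.Finite S T] {σ : T ≃ₐ[S] T} (hσ : orderOf σ = finrank S T) {t : T}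
    (ht : σ t = t) : ∃ s, algebraMap S T s = t := by
  let K := FractionRing S
  let L := FractionRing T
  let : Algebra K L := FractionRing.liftAlgebra S L
  have : IsScalarTower S K L := FractionRing.isScalarTower_liftAlgebra S L
  have hrank : finrank K L = finrank S T := IsFractionRing.finrank_eq S K T L
  have : FiniteDimensional K L := .of_finrank_pos (hrank ▸ finrank_pos)
  set τ := IsFractionRing.fieldEquivOfAlgEquivHom K L σ
  have hτ : orderOf τ = finrank K L := by
    rw [orderOf_injective _ (IsFractionRing.fieldEquivOfAlgEquivHom_injective S T K L) σ, hσ,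
      hrank]
  have hfixed : algebraMap T L t ∈ fixedField (Subgroup.zpowers τ) := by
    have hτt : τ ∈ MulAction.stabilizer (L ≃ₐ[K] L) (algebraMap T L t) := by
      change τ (algebraMap T L t) = _
      simp [τ, ht]
    exact fun f => Subgroup.zpowers_le.mpr hτt f.2
  rw [fixedField_zpowers_eq_bot hτ] at hfixed
  obtain ⟨k, hk⟩ := mem_bot.mp hfixed
  have hint : IsIntegral S k := by
    rw [← isIntegral_algebraMap_iff (algebraMap K L).injective, hk]
    exact (Algebra.IsIntegral.isIntegral t).algebraMap
  obtain ⟨s, rfl⟩ := IsIntegrallyClosed.isIntegral_iff.mp hint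
  refine ⟨s, IsFractionRing.injective T L ?_⟩
  rw [← hk, ← IsScalarTower.algebraMap_apply, ← IsScalarTower.algebraMap_apply]

theorem apply_sum_range_pow_apply {σ : T ≃ₐ[S] T} {n : ℕ} (hσn : σ ^ n = 1) (t : T) :
    σ (∑ i ∈ range n, (σ ^ i) t) = ∑ i ∈ range n, (σ ^ i) t := by
  have hshift := sum_range_succ' (fun i => (σ ^ i) t) n
  rw [sum_range_succ, hσn, pow_zero] at hshift
  simp_rw [map_sum, ← mul_apply, ← pow_succ']
  exact (add_right_cancel hshift).symm

theorem range_sum_pow_toLinearMap {σ : T ≃ₐ[S] T} {n : ℕ} (hσn : σ ^ n = 1)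
    (hfix : ∀ t, σ t = t → ∃ s, algebraMap S T s = t)
    (hunit : ∃ t, IsUnit (∑ i ∈ range n, (σ ^ i) t)) :
    LinearMap.range (∑ i ∈ range n, (σ ^ i).toLinearMap) =
      LinearMap.range (Algebra.linearMap S T) := by
  have hTr (t : T) : (∑ i ∈ range n, (σ ^ i).toLinearMap) t = ∑ i ∈ range n, (σ ^ i) t := by
    simp [LinearMap.sum_apply]
  refine le_antisymm ?_ ?_
  · rintro _ ⟨t, rfl⟩
    rw [hTr]
    exact hfix _ (apply_sum_range_pow_apply hσn t)
  · obtain ⟨t, u, hu⟩ := hunit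
    have hu_fix : σ ↑u⁻¹ = ↑u⁻¹ := by
      refine (Units.inv_eq_of_mul_eq_one_left ?_).symm
      rw [hu, ← apply_sum_range_pow_apply hσn t, ← hu, ← map_mul, u.inv_mul, map_one]
    obtain ⟨s', hs'⟩ := hfix _ hu_fix
    rintro _ ⟨s, rfl⟩
    refine ⟨(s * s') • t, ?_⟩
    rw [map_smul, hTr, ← hu, Algebra.smul_def, map_mul, hs', mul_assoc, u.inv_mul, mul_one]
    rfl

theorem exists_sum_pow_apply_notMem (I : Ideal T) [I.IsPrime] (σ : T ≃ₐ[S] T) {n : ℕ}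
    (hn : 0 < n) (hσ : ∀ i, 0 < i → i < n → ∃ t, (σ ^ i) t - t ∉ I) :
    ∃ t, ∑ i ∈ range n, (σ ^ i) t ∉ I := by
  let χ (i : Fin n) : T →* T ⧸ I :=
    ((Ideal.Quotient.mk I).comp (σ ^ (i : ℕ) : T ≃ₐ[S] T).toAlgHom.toRingHom).toMonoidHom
  have hχ_ne {i j : Fin n} (hij : i < j) : χ i ≠ χ j := by
    intro h
    obtain ⟨u, hu⟩ := hσ (j - i) (by omega) (by omega)
    apply hu
    have hσj : σ ^ (j : ℕ) = σ ^ (j - i : ℕ) * σ ^ (i : ℕ) := by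
      rw [← pow_add, Nat.sub_add_cancel hij.le]
    have := DFunLike.congr_fun h ((σ ^ (i : ℕ)).symm u)
    change Ideal.Quotient.mk I ((σ ^ (i : ℕ)) ((σ ^ (i : ℕ)).symm u)) =
      Ideal.Quotient.mk I ((σ ^ (j : ℕ)) ((σ ^ (i : ℕ)).symm u)) at this
    rw [hσj, mul_apply, apply_symm_apply] at this
    exact Ideal.Quotient.eq.mp this.symm
  have hχ : Function.Injective χ := by
    intro i j h
    by_contra hne
    rcases lt_or_gt_of_ne hne with hij | hji
    · exact hχ_ne hij h
    · exact hχ_ne hji h.symm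
  by_contra! hall
  have hsum : ∑ i, (1 : T ⧸ I) • ⇑(χ i) = 0 := by
    funext t
    simp only [Finset.sum_apply, one_smul, Pi.zero_apply]
    change ∑ i : Fin n, Ideal.Quotient.mk I ((σ ^ (i : ℕ)) t) = 0
    rw [← map_sum, Fin.sum_univ_eq_sum_range (fun i => (σ ^ i) t),
      Ideal.Quotient.eq_zero_iff_mem]
    exact hall t
  exact one_ne_zero <| Fintype.linearIndependent_iff.mp
    ((linearIndependent_monoidHom T (T ⧸ I)).comp χ hχ) _ hsum ⟨0, hn⟩

theorem mem_ker_smul_id_sub_inv_iff [IsDomain T] {σ : T ≃ₐ[S] T} {a : S}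
    (ha : algebraMap S T a ≠ 0) {t : T} :
    t ∈ LinearMap.ker (a • (LinearMap.id - (σ⁻¹).toLinearMap)) ↔ σ t = t := by
  rw [LinearMap.mem_ker, LinearMap.smul_apply, Algebra.smul_def, mul_eq_zero, or_iff_right ha,
    LinearMap.sub_apply, sub_eq_zero]
  exact σ.eq_symm_apply

end AlgEquiv

theorem Submodule.map_ofInjective_span_singleton {R M : Type*} [CommRing R] [AddCommGroup M]
    [Module R M] {ι : R →ₗ[R] M} (hι : Function.Injective ι)
    {f : M →ₗ[R] M} (hf : LinearMap.range f = LinearMap.range ι) (c : R) :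
    Submodule.map (LinearEquiv.ofInjective ι hι : R →ₗ[R] LinearMap.range ι) (Ideal.span {c}) =
      (LinearMap.range (c • f)).comap (LinearMap.range ι).subtype := by
  ext ⟨x, hx⟩
  simp only [Submodule.mem_map, Submodule.mem_comap, Ideal.mem_span_singleton', LinearMap.mem_range]
  constructor
  · rintro ⟨_, ⟨a, rfl⟩, he⟩
    obtain ⟨y, hy⟩ : ι a ∈ LinearMap.range f := hf ▸ LinearMap.mem_range_self ι a
    refine ⟨y, ?_⟩
    rw [Submodule.subtype_apply, ← congrArg Subtype.val he]
    simp [hy, mul_comm a c, ← smul_eq_mul]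
  · rintro ⟨y, rfl⟩
    obtain ⟨s, hs⟩ : f y ∈ LinearMap.range ι := hf ▸ LinearMap.mem_range_self f y
    refine ⟨s * c, ⟨s, rfl⟩, Subtype.ext ?_⟩
    simp [← hs, mul_comm s c, ← smul_eq_mul]

theorem statement7_general
    (S : Type*) [CommRing S] [IsDomain S] [IsDiscreteValuationRing S]
    (π : S) (hπ : Irreducible π)
    (T : Type*) [CommRing T] [IsDomain T] [IsDiscreteValuationRing T]
    [Algebra S T] [Module.Free S T]
    (n : ℕ) (hn : 1 ≤ n) (hrank : Module.finrank S T = n)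
    (hmax : IsLocalRing.maximalIdeal T = Ideal.span {algebraMap S T π})
    (σ : T ≃ₐ[S] T) (hσn : σ ^ n = 1)
    (hgen : ∀ i : ℕ, 0 < i → i < n →
      ∃ t : T, (σ ^ i) t - t ∉ Ideal.span {algebraMap S T π}) :
    LinearMap.ker (π • ((LinearMap.id : T →ₗ[S] T) - (σ⁻¹).toLinearMap)) =
      LinearMap.range (Algebra.linearMap S T) ∧
    ∀ c : S, c ≠ 0 →
      Nonempty (
        (LinearMap.ker (π • ((LinearMap.id : T →ₗ[S] T) - (σ⁻¹).toLinearMap)) ⧸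
          Submodule.comap
            (LinearMap.ker (π • ((LinearMap.id : T →ₗ[S] T) - (σ⁻¹).toLinearMap))).subtype
            (LinearMap.range (c • ∑ i ∈ Finset.range n, (σ ^ i).toLinearMap)))
        ≃ₗ[S] S ⧸ Ideal.span {c}) := by
  have : Module.Finite S T := Module.finite_of_finrank_pos (by omega)
  have horder : orderOf σ = finrank S T := by
    refine hrank ▸ (orderOf_eq_iff hn).mpr ⟨hσn, fun i hin hi0 hσi => ?_⟩
    obtain ⟨t, ht⟩ := hgen i hi0 hin
    exact ht (by simp [hσi])
  have hfix (t : T) (ht : σ t = t) : ∃ s, algebraMap S T s = t :=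
    σ.exists_algebraMap_eq_of_apply_eq horder ht
  have hπT : algebraMap S T π ≠ 0 :=
    (map_ne_zero_iff _ (FaithfulSMul.algebraMap_injective S T)).mpr hπ.ne_zero
  have hker : LinearMap.ker (π • ((LinearMap.id : T →ₗ[S] T) - (σ⁻¹).toLinearMap)) =
      LinearMap.range (Algebra.linearMap S T) := by
    ext t
    rw [σ.mem_ker_smul_id_sub_inv_iff hπT]
    exact ⟨hfix t, by rintro ⟨s, rfl⟩; exact σ.commutes s⟩
  have hunit : ∃ t, IsUnit (∑ i ∈ range n, (σ ^ i) t) := by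
    have : (Ideal.span {algebraMap S T π}).IsPrime := hmax ▸ inferInstance
    obtain ⟨t, ht⟩ := σ.exists_sum_pow_apply_notMem _ hn hgen
    exact ⟨t, IsLocalRing.notMem_maximalIdeal.mp (hmax ▸ ht)⟩
  refine ⟨hker, fun c _ => ⟨?_⟩⟩
  rw [hker]
  exact (Submodule.Quotient.equiv _ _ _ (Submodule.map_ofInjective_span_singleton
    (FaithfulSMul.algebraMap_injective S T) (σ.range_sum_pow_toLinearMap hσn hfix hunit) c)).symm

/-- In the unramified setting (`S` a complete DVR with uniformizer `π` and
finite residue field, `T` an `S`-algebra DVR, finite free of rank `n ≥ 1` over `S` with maximal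
ideal generated by the image of `π`, and `σ` an `S`-algebra automorphism with `σ ^ n = 1` whose
reduction mod `π` generates the Galois group of the residue extension), the kernel of the
`S`-linear endomorphism `t ↦ π·(t - σ⁻¹ t)` of `T` equals `S·1`; consequently, for every
nonzero `c ∈ S`, the quotient of this kernel by the image of `t ↦ c · Tr t` is isomorphic to
`S/(c)` as an `S`-module. -/
theorem statement7
    (S : Type*) [CommRing S] [IsDomain S] [IsDiscreteValuationRing S]
    (π : S) (hπ : Irreducible π)
    [IsAdicComplete (Ideal.span {π}) S] [Finite (S ⧸ Ideal.span {π})]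
    (T : Type*) [CommRing T] [IsDomain T] [IsDiscreteValuationRing T]
    [Algebra S T] [Module.Free S T]
    (n : ℕ) (hn : 1 ≤ n) (hrank : Module.finrank S T = n)
    (hmax : IsLocalRing.maximalIdeal T = Ideal.span {algebraMap S T π})
    (σ : T ≃ₐ[S] T) (hσn : σ ^ n = 1)
    (hgen : ∀ i : ℕ, 0 < i → i < n →
      ∃ t : T, (σ ^ i) t - t ∉ Ideal.span {algebraMap S T π}) :
    LinearMap.ker (π • ((LinearMap.id : T →ₗ[S] T) - (σ⁻¹).toLinearMap)) =
      LinearMap.range (Algebra.linearMap S T) ∧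
    ∀ c : S, c ≠ 0 →
      Nonempty (
        (LinearMap.ker (π • ((LinearMap.id : T →ₗ[S] T) - (σ⁻¹).toLinearMap)) ⧸
          Submodule.comap
            (LinearMap.ker (π • ((LinearMap.id : T →ₗ[S] T) - (σ⁻¹).toLinearMap))).subtype
            (LinearMap.range (c • ∑ i ∈ Finset.range n, (σ ^ i).toLinearMap)))
        ≃ₗ[S] S ⧸ Ideal.span {c}) :=
  statement7_general S π hπ T n hn hrank hmax σ hσn hgen
end

section
/- Suppose given a commutative diagram of A-modules with exact rows, whose top row is 0 → (x^{d−1}·A)^{⊕n} →^{i} A^{⊕n} →^{q} (A/(x^{d−1}))^{⊕n} → 0 with i the coordinatewise inclusion and q the coordinatewise quotient map, whose bottom row is 0 → 𝔽 →^{i_M} M → A/(x^{d−1}) → 0, and with vertical maps f₀ : (x^{d−1}·A)^{⊕n} → 𝔽, f₁ : A^{⊕n} → M, f₂ : (A/(x^{d−1}))^{⊕n} → A/(x^{d−1}) such that f₀ and f₂ are surjective. Then M is isomorphic to A = 𝔽[x]/(x^d) as an A-module. -/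
set_option synthInstance.maxHeartbeats 1000000
set_option maxHeartbeats 1000000

/-- `Aq 𝔽 d` is the truncated polynomial algebra `A = 𝔽[x]/(x^d)`. -/
abbrev Aq (𝔽 : Type*) [Field 𝔽] (d : ℕ) : Type _ :=
  Polynomial 𝔽 ⧸ Ideal.span {(Polynomial.X : Polynomial 𝔽) ^ d}

/-- `xq 𝔽 d` is the class `x` of `X` in `A = 𝔽[x]/(x^d)`. -/
noncomputable abbrev xq (𝔽 : Type*) [Field 𝔽] (d : ℕ) : Aq 𝔽 d :=
  Ideal.Quotient.mk _ Polynomial.X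

/-!
Let `s = x^(d-1)`. The left square and the surjectivity of `f₀` give `m ∈ M` with `s • m ≠ 0`.
Lift `1 ∈ A/(x^(d-1))` to `m₀ ∈ M`; writing `m = b • m₀ + iM y` and using `s • 𝔽 = 0` shows
`s • m₀ ≠ 0`. Every nonzero ideal of `A` contains `s`, so `a ↦ a • m₀` is injective. Its image
contains `s • m₀`, a nonzero element of the simple submodule `iM 𝔽 = ker g`, hence all of `ker g`;
since it also maps onto `A/(x^(d-1))`, it is all of `M`.
-/

section TruncatedQuotient

variable {R : Type*} [CommRing R] [IsPrincipalIdealRing R] {p : R} {d : ℕ}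

theorem isMaximal_span_mk_of_irreducible (hp : Irreducible p) (hd : d ≠ 0) :
    (Ideal.span {Ideal.Quotient.mk (Ideal.span {p ^ d}) p}).IsMaximal := by
  have := PrincipalIdealRing.isMaximal_of_irreducible hp
  have hker : RingHom.ker (Ideal.Quotient.mk (Ideal.span {p ^ d})) ≤ Ideal.span {p} := by
    rw [Ideal.mk_ker, Ideal.span_singleton_le_span_singleton]
    exact dvd_pow_self p hd
  simpa only [Ideal.map_span, Set.image_singleton] using
    Ideal.IsMaximal.map_of_surjective_of_ker_le Ideal.Quotient.mk_surjective hker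

theorem mk_pow_pred_mem_span_singleton [IsDomain R] (hp : Irreducible p)
    {a : R ⧸ Ideal.span {p ^ d}} (ha : a ≠ 0) :
    Ideal.Quotient.mk (Ideal.span {p ^ d}) p ^ (d - 1) ∈ Ideal.span {a} := by
  obtain ⟨r, rfl⟩ := Ideal.Quotient.mk_surjective a
  have hr : r ≠ 0 := by rintro rfl; exact ha (map_zero _)
  obtain ⟨k, s, hs, rfl⟩ := WfDvdMonoid.max_power_factor hr hp
  have hk : k < d := by
    by_contra! hk
    refine ha (Ideal.Quotient.eq_zero_iff_mem.mpr (Ideal.mem_span_singleton.mpr ?_))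
    exact (pow_dvd_pow p hk).mul_right s
  obtain ⟨u, v, huv⟩ := hp.coprime_pow_of_not_dvd d hs
  have hpow : p ^ (d - 1 - k) * p ^ k = p ^ (d - 1) := pow_sub_mul_pow p (by omega)
  refine Ideal.mem_span_singleton'.mpr ⟨Ideal.Quotient.mk _ (u * p ^ (d - 1 - k)), ?_⟩
  rw [← map_pow, ← map_mul, Ideal.Quotient.eq, Ideal.mem_span_singleton]
  exact ⟨-(p ^ (d - 1) * v), by linear_combination p ^ (d - 1) * huv + (u * s) * hpow⟩

end TruncatedQuotient

section CyclicExtension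

variable {R M N : Type*} [CommRing R] [AddCommGroup M] [Module R M] [AddCommGroup N] [Module R N]
  {J : Ideal R} {i : N →ₗ[R] M} {g : M →ₗ[R] R ⧸ J} {m₀ : M}

theorem exists_eq_smul_add_of_exact (hexact : LinearMap.range i = LinearMap.ker g)
    (hm₀ : g m₀ = Submodule.Quotient.mk 1) (z : M) : ∃ (b : R) (y : N), z = b • m₀ + i y := by
  obtain ⟨b, hb⟩ := Submodule.Quotient.mk_surjective _ (g z)
  have hker : z - b • m₀ ∈ LinearMap.ker g := by
    rw [LinearMap.mem_ker, map_sub, map_smul, hm₀, ← Submodule.Quotient.mk_smul, smul_eq_mul,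
      mul_one, hb, sub_self]
  obtain ⟨y, hy⟩ := hexact ▸ hker
  exact ⟨b, y, by rw [hy]; abel⟩

theorem smul_ne_zero_of_exact (hexact : LinearMap.range i = LinearMap.ker g)
    (hm₀ : g m₀ = Submodule.Quotient.mk 1) {s : R} (hsN : ∀ y : N, s • y = 0) {m : M}
    (hm : s • m ≠ 0) : s • m₀ ≠ 0 := by
  obtain ⟨b, y, rfl⟩ := exists_eq_smul_add_of_exact hexact hm₀ m
  rw [smul_add, ← map_smul, hsN, map_zero, add_zero, smul_comm] at hm
  exact fun h => hm (by rw [h, smul_zero])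

theorem toSpanSingleton_surjective_of_exact [IsSimpleModule R N]
    (hexact : LinearMap.range i = LinearMap.ker g) (hm₀ : g m₀ = Submodule.Quotient.mk 1)
    {s : R} (hsJ : s ∈ J) (hs : s • m₀ ≠ 0) :
    Function.Surjective (LinearMap.toSpanSingleton R M m₀) := by
  have hker : s • m₀ ∈ LinearMap.ker g := by
    rw [LinearMap.mem_ker, map_smul, hm₀, ← Submodule.Quotient.mk_smul, smul_eq_mul, mul_one,
      Submodule.Quotient.mk_eq_zero]
    exact hsJ
  obtain ⟨t, ht⟩ := hexact ▸ hker
  have ht₀ : t ≠ 0 := by rintro rfl; exact hs (by rw [← ht, map_zero])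
  intro z
  obtain ⟨b, y, rfl⟩ := exists_eq_smul_add_of_exact hexact hm₀ z
  have hy : y ∈ Submodule.span R {t} := IsSimpleModule.span_singleton_eq_top R ht₀ ▸ trivial
  obtain ⟨c, rfl⟩ := Submodule.mem_span_singleton.mp hy
  exact ⟨b + c * s, by rw [LinearMap.toSpanSingleton_apply, add_smul, mul_smul, ← ht, map_smul]⟩

end CyclicExtension

theorem toSpanSingleton_injective_of_smul_ne_zero {R M : Type*} [CommRing R] [AddCommGroup M]
    [Module R M] {s : R} (hs : ∀ a : R, a ≠ 0 → s ∈ Ideal.span {a}) {m : M} (hm : s • m ≠ 0) :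
    Function.Injective (LinearMap.toSpanSingleton R M m) := by
  refine (injective_iff_map_eq_zero _).mpr fun a ha => ?_
  by_contra ha₀
  obtain ⟨b, hb⟩ := Ideal.mem_span_singleton'.mp (hs a ha₀)
  rw [LinearMap.toSpanSingleton_apply] at ha
  exact hm (by rw [← hb, mul_smul, ha, smul_zero])

theorem exists_smul_ne_zero_of_comp_eq {R M N ι : Type*} [CommRing R] [AddCommGroup M]
    [Module R M] [AddCommGroup N] [Module R N] [Nontrivial N] {s : R} {i : N →ₗ[R] M}
    (hi : Function.Injective i) {f₀ : (ι → Ideal.span {s}) →ₗ[R] N}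
    (hf₀ : Function.Surjective f₀) {f₁ : (ι → R) →ₗ[R] M}
    (hsq : i.comp f₀ = f₁.comp (LinearMap.pi fun j => (Ideal.span {s}).subtype.comp
      (LinearMap.proj j))) :
    ∃ m : M, s • m ≠ 0 := by
  obtain ⟨y, hy⟩ := exists_ne (0 : N)
  obtain ⟨w, rfl⟩ := hf₀ y
  choose u hu using fun j => Ideal.mem_span_singleton'.mp (w j).2
  have hw : i (f₀ w) = s • f₁ u := by
    rw [← LinearMap.comp_apply, hsq, LinearMap.comp_apply, ← map_smul]
    congr 1
    funext j
    simp [← hu j, mul_comm]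
  exact ⟨f₁ u, hw ▸ (map_ne_zero_iff i hi).mpr hy⟩

theorem statement10_general
    (𝔽 : Type*) [Field 𝔽] (d n : ℕ) (hd : 2 ≤ d)
    (M : Type*) [AddCommGroup M] [Module (Aq 𝔽 d) M]
    (iM : (Aq 𝔽 d ⧸ (Ideal.span {xq 𝔽 d} : Ideal (Aq 𝔽 d))) →ₗ[Aq 𝔽 d] M)
    (g : M →ₗ[Aq 𝔽 d] (Aq 𝔽 d ⧸ (Ideal.span {xq 𝔽 d ^ (d - 1)} : Ideal (Aq 𝔽 d))))
    (hinj : Function.Injective iM)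
    (hexact : LinearMap.range iM = LinearMap.ker g)
    (hsurj : Function.Surjective g)
    (f₀ : (Fin n → (Ideal.span {xq 𝔽 d ^ (d - 1)} : Ideal (Aq 𝔽 d))) →ₗ[Aq 𝔽 d]
      (Aq 𝔽 d ⧸ (Ideal.span {xq 𝔽 d} : Ideal (Aq 𝔽 d))))
    (f₁ : (Fin n → Aq 𝔽 d) →ₗ[Aq 𝔽 d] M)
    (hsq₁ : iM.comp f₀ = f₁.comp (LinearMap.pi fun j =>
      (Ideal.span {xq 𝔽 d ^ (d - 1)} : Ideal (Aq 𝔽 d)).subtype.comp (LinearMap.proj j)))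
    (hf₀ : Function.Surjective f₀) :
    Nonempty (M ≃ₗ[Aq 𝔽 d] Aq 𝔽 d) := by
  have hX := Polynomial.irreducible_X (R := 𝔽)
  have hmax := isMaximal_span_mk_of_irreducible hX (by omega : d ≠ 0)
  have : IsSimpleModule (Aq 𝔽 d) (Aq 𝔽 d ⧸ (Ideal.span {xq 𝔽 d} : Ideal (Aq 𝔽 d))) :=
    isSimpleModule_iff_isCoatom.mpr (Ideal.isMaximal_def.mp hmax)
  have hs : xq 𝔽 d ^ (d - 1) ∈ (Ideal.span {xq 𝔽 d} : Ideal (Aq 𝔽 d)) :=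
    Ideal.mem_span_singleton.mpr (dvd_pow_self _ (by omega))
  have hsN (y : Aq 𝔽 d ⧸ (Ideal.span {xq 𝔽 d} : Ideal (Aq 𝔽 d))) : xq 𝔽 d ^ (d - 1) • y = 0 :=
    Module.mem_annihilator.mp
      ((Ideal.annihilator_quotient (I := Ideal.span {xq 𝔽 d})).symm ▸ hs) y
  obtain ⟨m, hm⟩ := exists_smul_ne_zero_of_comp_eq hinj hf₀ hsq₁
  obtain ⟨m₀, hm₀⟩ := hsurj (Submodule.Quotient.mk 1)
  have hsm₀ := smul_ne_zero_of_exact hexact hm₀ hsN hm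
  have hinjφ := toSpanSingleton_injective_of_smul_ne_zero
    (fun _ ha => mk_pow_pred_mem_span_singleton hX ha) hsm₀
  have hsurjφ := toSpanSingleton_surjective_of_exact hexact hm₀
    (Ideal.mem_span_singleton_self _) hsm₀
  exact ⟨(LinearEquiv.ofBijective _ ⟨hinjφ, hsurjφ⟩).symm⟩

/-- Let `𝔽` be a field, `d ≥ 2`, `n ≥ 1`, and `A = 𝔽[x]/(x^d)`.  Suppose
given a commutative diagram of `A`-modules with exact rows whose top row is
`0 → (x^(d-1)·A)^n → A^n → (A/(x^(d-1)))^n → 0` (coordinatewise inclusion and quotient maps),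
whose bottom row is `0 → 𝔽 → M → A/(x^(d-1)) → 0` (here `𝔽`, the `A`-module on which `x`
acts as zero, is realized as `A/(x)`), and whose outer vertical maps `f₀`, `f₂` are
surjective.  Then `M ≅ A` as `A`-modules. -/
theorem statement10
    (𝔽 : Type*) [Field 𝔽] (d n : ℕ) (hd : 2 ≤ d) (hn : 1 ≤ n)
    (M : Type*) [AddCommGroup M] [Module (Aq 𝔽 d) M]
    (iM : (Aq 𝔽 d ⧸ (Ideal.span {xq 𝔽 d} : Ideal (Aq 𝔽 d))) →ₗ[Aq 𝔽 d] M)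
    (g : M →ₗ[Aq 𝔽 d] (Aq 𝔽 d ⧸ (Ideal.span {xq 𝔽 d ^ (d - 1)} : Ideal (Aq 𝔽 d))))
    (hinj : Function.Injective iM)
    (hexact : LinearMap.range iM = LinearMap.ker g)
    (hsurj : Function.Surjective g)
    (f₀ : (Fin n → (Ideal.span {xq 𝔽 d ^ (d - 1)} : Ideal (Aq 𝔽 d))) →ₗ[Aq 𝔽 d]
      (Aq 𝔽 d ⧸ (Ideal.span {xq 𝔽 d} : Ideal (Aq 𝔽 d))))
    (f₁ : (Fin n → Aq 𝔽 d) →ₗ[Aq 𝔽 d] M)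
    (f₂ : (Fin n → (Aq 𝔽 d ⧸ (Ideal.span {xq 𝔽 d ^ (d - 1)} : Ideal (Aq 𝔽 d)))) →ₗ[Aq 𝔽 d]
      (Aq 𝔽 d ⧸ (Ideal.span {xq 𝔽 d ^ (d - 1)} : Ideal (Aq 𝔽 d))))
    (hsq₁ : iM.comp f₀ = f₁.comp (LinearMap.pi fun j =>
      (Ideal.span {xq 𝔽 d ^ (d - 1)} : Ideal (Aq 𝔽 d)).subtype.comp (LinearMap.proj j)))
    (hsq₂ : g.comp f₁ = f₂.comp (LinearMap.pi fun j =>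
      (Ideal.span {xq 𝔽 d ^ (d - 1)} : Ideal (Aq 𝔽 d)).mkQ.comp (LinearMap.proj j)))
    (hf₀ : Function.Surjective f₀)
    (hf₂ : Function.Surjective f₂) :
    Nonempty (M ≃ₗ[Aq 𝔽 d] Aq 𝔽 d) :=
  statement10_general 𝔽 d n hd M iM g hinj hexact hsurj f₀ f₁ hsq₁ hf₀
end
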